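/- arXiv:2605.14921 — 10 statements merged into one kernel-verified Lean document; each statement's English description precedes it below -/
import Mathlib

section
/- For all positive integers m and n, the number (gcd(m,n)/(m+n)) * C(m+n, n) is an integer. -/
/-- Key identity: `(a+b) ∣ b * C(a+b, b)` for positive `b`. -/
lemma add_dvd_mul_choose (a b : ℕ) (hb : 0 < b) :
    (a + b) ∣ b * Nat.choose (a + b) b := by
  obtain ⟨c, rfl⟩ := Nat.exists_eq_succ_of_ne_zero hb.ne'
  have h := Nat.add_one_mul_choose_eq (a + c) c
  have : a + (c + 1) = (a + c) + 1 := by omega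
  rw [this]
  exact ⟨Nat.choose (a + c) c, by rw [Nat.mul_comm, h]⟩

/-- For all positive integers `m` and `n`, the number
`(gcd(m,n)/(m+n)) * C(m+n, n)` is an integer. -/
theorem cgen_integral (m n : ℕ) (hm : 0 < m) (hn : 0 < n) :
    (m + n) ∣ Nat.gcd m n * Nat.choose (m + n) n := by
  rw [← Nat.gcd_mul_right]
  apply Nat.dvd_gcd
  · have := add_dvd_mul_choose n m hm
    have hs : (m + n).choose m = (m + n).choose n := by
      have := Nat.choose_symm (Nat.le_add_right m n)
      simpa using this.symm
    rwa [Nat.add_comm n m, hs] at this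
  · exact add_dvd_mul_choose m n hn
end

section
/- For coprime positive integers m and n, (1/(m+n)) * C(m+n, n) is an integer. -/
/-- For coprime positive integers `m` and `n`, `(1/(m+n)) * C(m+n, n)` is an integer. -/
theorem catalan_integral (m n : ℕ) (hm : 0 < m) (hn : 0 < n) (h : Nat.Coprime m n) :
    (m + n) ∣ Nat.choose (m + n) n := by
  have key : ∀ a b : ℕ, 0 < b → (a + b) ∣ b * Nat.choose (a + b) b := by
    intro a b hb
    obtain ⟨c, rfl⟩ := Nat.exists_eq_succ_of_ne_zero hb.ne'
    have := Nat.add_one_mul_choose_eq (a + c) c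
    have heq : a + (c + 1) = (a + c) + 1 := by ring
    rw [heq]
    exact ⟨Nat.choose (a + c) c, by rw [Nat.mul_comm]; exact this.symm⟩
  have h1 : (m + n) ∣ n * Nat.choose (m + n) n := key m n hn
  have h2 : (m + n) ∣ m * Nat.choose (m + n) n := by
    have := key n m hm
    rwa [Nat.add_comm n m, Nat.choose_symm_add] at this
  have := Nat.dvd_gcd h2 h1
  rwa [Nat.gcd_mul_right, h, one_mul] at this
end

section
/- Let m, n be positive integers and let w be a binary word of type (m,n). If a rotation by k fixes w (with 0 < k < m+n), then (m+n)/gcd(m,n) divides k. -/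
/-- Rotation of a word by `k`: the letter at position `i` of the rotated word is
the letter at position `i + k (mod N)` of `w` (moves the first `k` letters to the end). -/
def rotNat (N k : ℕ) (w : Fin N → Bool) : Fin N → Bool :=
  fun i => w ⟨(i.val + k) % N, Nat.mod_lt _ i.pos⟩

/-- A binary word of type `(m,n)`: length `m+n` with exactly `m` `true`s (ups). -/
def IsWord (m n : ℕ) (w : Fin (m + n) → Bool) : Prop :=
  (Finset.univ.filter (fun i => w i = true)).card = m

instance (m n : ℕ) : DecidablePred (IsWord m n) := fun _ => by
  unfold IsWord; infer_instance

/-- Order of the rotation stabilizer of a word. -/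
def stabCard (N : ℕ) (w : Fin N → Bool) : ℕ :=
  (Finset.univ.filter (fun k : Fin N => rotNat N k.val w = w)).card

/-- The rotation orbit of a word, as a finite set. -/
def orbit (N : ℕ) (w : Fin N → Bool) : Finset (Fin N → Bool) :=
  Finset.univ.filter (fun w' => ∃ k : Fin N, rotNat N k.val w = w')

lemma rot_rot (N a b : ℕ) (w : Fin N → Bool) :
    rotNat N a (rotNat N b w) = fun i : Fin N => w ⟨(i.val + a + b) % N, Nat.mod_lt _ i.pos⟩ := by
  funext i
  simp only [rotNat]
  congr 1
  exact Fin.ext (Nat.mod_add_mod _ _ _)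

lemma rot_zero (N : ℕ) (w : Fin N → Bool) : rotNat N 0 w = w := by
  funext i
  simp only [rotNat]
  congr 1
  exact Fin.ext (by simp [Nat.mod_eq_of_lt i.isLt])

/-- Two words are rotation-equivalent if one is a rotation of the other. -/
def rotRel (N : ℕ) (w₁ w₂ : Fin N → Bool) : Prop :=
  ∃ k : Fin (N + 1), rotNat N k.val w₁ = w₂

instance (N : ℕ) : DecidableRel (rotRel N) := fun _ _ => by
  unfold rotRel; infer_instance

lemma rot_full (N : ℕ) (w : Fin N → Bool) : rotNat N N w = w := by
  funext i
  simp only [rotNat]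
  congr 1
  exact Fin.ext (by simp [Nat.add_mod_right, Nat.mod_eq_of_lt i.isLt])

lemma rotRel_refl (N : ℕ) (w : Fin N → Bool) : rotRel N w w :=
  ⟨⟨0, Nat.succ_pos N⟩, rot_zero N w⟩

lemma rotRel_symm (N : ℕ) {w₁ w₂ : Fin N → Bool} (h : rotRel N w₁ w₂) : rotRel N w₂ w₁ := by
  obtain ⟨k, hk⟩ := h
  refine ⟨⟨N - k.val, by omega⟩, ?_⟩
  subst hk
  rw [rot_rot]
  funext i
  have : (i.val + (N - k.val) + k.val) = i.val + N := by
    have := k.isLt; omega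
  rw [this]
  congr 1
  exact Fin.ext (by simp [Nat.add_mod_right, Nat.mod_eq_of_lt i.isLt])

lemma rotRel_trans (N : ℕ) {w₁ w₂ w₃ : Fin N → Bool}
    (h₁ : rotRel N w₁ w₂) (h₂ : rotRel N w₂ w₃) : rotRel N w₁ w₃ := by
  obtain ⟨k, hk⟩ := h₁
  obtain ⟨l, hl⟩ := h₂
  subst hk; subst hl
  rcases Nat.eq_zero_or_pos N with hN | hN
  · exact ⟨⟨0, Nat.succ_pos N⟩, funext fun i => absurd i.pos (by omega)⟩
  · refine ⟨⟨(l.val + k.val) % N, by have := Nat.mod_lt (l.val + k.val) hN; omega⟩, ?_⟩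
    rw [rot_rot]
    funext i
    simp only [rotNat]
    congr 1
    refine Fin.ext ?_
    show (i.val + (l.val + k.val) % N) % N = (i.val + l.val + k.val) % N
    rw [Nat.add_mod_mod]; congr 1; omega

/-- Rotation-equivalence as a setoid on words of type `(m,n)`. -/
def wordSetoid (m n : ℕ) : Setoid {w : Fin (m + n) → Bool // IsWord m n w} where
  r w₁ w₂ := rotRel (m + n) w₁.val w₂.val
  iseqv := ⟨fun w => rotRel_refl _ w.val, rotRel_symm _, rotRel_trans _⟩

instance (m n : ℕ) : DecidableRel (wordSetoid m n).r := fun w₁ w₂ =>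
  decidable_of_iff (rotRel (m + n) w₁.val w₂.val) Iff.rfl

instance (m n : ℕ) : DecidableEq (Quotient (wordSetoid m n)) := fun ω₁ ω₂ =>
  Quotient.recOnSubsingleton₂ ω₁ ω₂ fun w₁ w₂ =>
    decidable_of_iff (rotRel (m + n) w₁.val w₂.val) (Quotient.eq (r := wordSetoid m n)).symm

/-- A binary necklace of type `(m,n)` : a rotation orbit of words of type `(m,n)`. -/
def Necklace (m n : ℕ) : Type :=
  Quotient (wordSetoid m n)

instance (m n : ℕ) : Fintype (Necklace m n) :=
  @Quotient.fintype _ _ (wordSetoid m n)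
    (fun w₁ w₂ => decidable_of_iff (rotRel (m + n) w₁.val w₂.val) Iff.rfl)

/-- If a nontrivial rotation by `k` (with `0 < k < m+n`) fixes a binary word of type
`(m,n)`, then `(m+n)/gcd(m,n)` divides `k`. -/
theorem rot_fix_period (m n k : ℕ) (hm : 0 < m) (hn : 0 < n)
    (w : Fin (m + n) → Bool) (hw : IsWord m n w)
    (hk0 : 0 < k) (hk : k < m + n) (hfix : rotNat (m + n) k w = w) :
    (m + n) / Nat.gcd m n ∣ k := by
  have hN0 : 0 < m + n := by omega
  haveI : NeZero (m + n) := ⟨by omega⟩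
  set W : ZMod (m + n) → Bool := fun x => w ⟨x.val, ZMod.val_lt x⟩ with hWdef
  have hWnat : ∀ (j : ℕ) (hj : j < m + n), W ((j : ℕ) : ZMod (m + n)) = w ⟨j, hj⟩ := by
    intro j hj
    simp only [hWdef]
    congr 1
    exact Fin.ext (by simp [ZMod.val_natCast, Nat.mod_eq_of_lt hj])
  have hW : ∀ x : ZMod (m + n), W (x + (k : ℕ)) = W x := by
    intro x
    have hxk : (x + ((k : ℕ) : ZMod (m + n))).val = (x.val + k) % (m + n) := by
      rw [ZMod.val_add, ZMod.val_natCast, Nat.add_mod_mod]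
    have hthis := congrFun hfix ⟨x.val, ZMod.val_lt x⟩
    simp only [rotNat] at hthis
    simp only [hWdef]
    rw [← hthis]
    congr 1
    exact Fin.ext hxk
  have hWz : ∀ (z : ℤ) (x : ZMod (m + n)), W (x + z • ((k : ℕ) : ZMod (m + n))) = W x := by
    intro z
    induction z using Int.induction_on with
    | zero => intro x; simp
    | succ i ih =>
        intro x
        have h1 : x + ((i : ℤ) + 1) • ((k : ℕ) : ZMod (m + n))
            = (x + (i : ℤ) • ((k : ℕ) : ZMod (m + n))) + (k : ℕ) := by
          rw [add_smul, one_smul]; ring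
        rw [h1, hW, ih]
    | pred i ih =>
        intro x
        have key : (x + (-(i : ℤ) - 1) • ((k : ℕ) : ZMod (m + n))) + (k : ℕ)
            = x + (-(i : ℤ)) • ((k : ℕ) : ZMod (m + n)) := by
          rw [sub_smul, one_smul]; ring
        have h2 := hW (x + (-(i : ℤ) - 1) • ((k : ℕ) : ZMod (m + n)))
        rw [key, ih] at h2
        exact h2.symm
  set d : ℕ := Nat.gcd k (m + n) with hd
  have hd0 : 0 < d := Nat.gcd_pos_of_pos_left _ hk0
  have hdN : d ∣ m + n := Nat.gcd_dvd_right _ _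
  have hdleN : d ≤ m + n := Nat.le_of_dvd hN0 hdN
  have hcast : ((d : ℕ) : ZMod (m + n)) = (Nat.gcdA k (m + n)) • ((k : ℕ) : ZMod (m + n)) := by
    have hbez : (d : ℤ) = k * Nat.gcdA k (m + n) + (m + n) * Nat.gcdB k (m + n) :=
      Nat.gcd_eq_gcd_ab k (m + n)
    have hc2 : ((d : ℤ) : ZMod (m + n))
        = ((k * Nat.gcdA k (m + n) + (m + n) * Nat.gcdB k (m + n) : ℤ) : ZMod (m + n)) := by
      rw [hbez]
    push_cast at hc2
    have hz : ((m : ZMod (m + n)) + (n : ZMod (m + n))) = 0 := by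
      rw [← Nat.cast_add, ZMod.natCast_self]
    rw [zsmul_eq_mul]
    push_cast
    rw [hc2, hz]; ring
  have hWd : ∀ x : ZMod (m + n), W (x + (d : ℕ)) = W x := by
    intro x; rw [hcast]; exact hWz _ x
  have hper : ∀ (q r : ℕ), W (((r + q * d : ℕ) : ZMod (m + n))) = W ((r : ℕ) : ZMod (m + n)) := by
    intro q
    induction q with
    | zero => intro r; simp
    | succ q ih =>
        intro r
        have h1 : (r + (q + 1) * d : ℕ) = (r + q * d) + d := by ring
        rw [h1]
        have h2 : (((r + q * d) + d : ℕ) : ZMod (m + n))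
            = (((r + q * d : ℕ) : ZMod (m + n))) + (d : ℕ) := by push_cast; ring
        rw [h2, hWd, ih]
  have hc' : (m + n) / d * d = m + n := Nat.div_mul_cancel hdN
  set e : Fin ((m + n) / d) × Fin d ≃ Fin (m + n) := finProdFinEquiv.trans (finCongr hc')
    with he
  have hcard : (Finset.univ.filter (fun i : Fin (m + n) => w i = true)).card
      = (Finset.univ.filter (fun p : Fin ((m + n) / d) × Fin d => w (e p) = true)).card := by
    exact (Finset.card_equiv e (fun p => by simp)).symm
  have heval : ∀ p : Fin ((m + n) / d) × Fin d,
      w (e p) = w ⟨p.2.val, lt_of_lt_of_le p.2.isLt hdleN⟩ := by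
    intro p
    have hev : (e p).val = p.2.val + p.1.val * d := by
      simp [he, finProdFinEquiv, finCongr]
      ring
    have h1 : w (e p) = W (((e p).val : ℕ) : ZMod (m + n)) := (hWnat _ (e p).isLt).symm
    rw [h1, hev, hper p.1.val p.2.val, hWnat _ (lt_of_lt_of_le p.2.isLt hdleN)]
  have hsplit : (Finset.univ.filter (fun p : Fin ((m + n) / d) × Fin d => w (e p) = true))
      = Finset.univ ×ˢ (Finset.univ.filter
          (fun r : Fin d => w ⟨r.val, lt_of_lt_of_le r.isLt hdleN⟩ = true)) := by
    ext p
    simp [heval p, Finset.mem_product]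
  have hm' : m = ((m + n) / d) *
      (Finset.univ.filter
        (fun r : Fin d => w ⟨r.val, lt_of_lt_of_le r.isLt hdleN⟩ = true)).card := by
    have hw' := hw
    unfold IsWord at hw'
    rw [hcard, hsplit, Finset.card_product] at hw'
    simp only [Finset.card_univ, Fintype.card_fin] at hw'
    exact hw'.symm
  have hdvdm : (m + n) / d ∣ m := ⟨_, hm'⟩
  have hdvdN : (m + n) / d ∣ m + n := Nat.div_dvd_of_dvd hdN
  have hdvdn : (m + n) / d ∣ n := by
    have h3 := Nat.dvd_sub hdvdN hdvdm
    simpa using h3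
  have hgdvd : (m + n) / d ∣ Nat.gcd m n := Nat.dvd_gcd hdvdm hdvdn
  have hgN : Nat.gcd m n ∣ m + n := Nat.dvd_add (Nat.gcd_dvd_left m n) (Nat.gcd_dvd_right m n)
  have hg0 : 0 < Nat.gcd m n := Nat.gcd_pos_of_pos_left _ hm
  -- show (m+n)/gcd m n ∣ d
  obtain ⟨s, hs⟩ := hgdvd
  have hNdg : (m + n) ∣ d * Nat.gcd m n := by
    refine ⟨s, ?_⟩
    rw [hs, ← mul_assoc, Nat.mul_div_cancel' hdN]
  obtain ⟨c, hc⟩ := hNdg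
  have hNg : (m + n) / Nat.gcd m n * Nat.gcd m n = m + n := Nat.div_mul_cancel hgN
  have hdc : d = (m + n) / Nat.gcd m n * c := by
    have h4 : d * Nat.gcd m n = ((m + n) / Nat.gcd m n * c) * Nat.gcd m n :=
      calc d * Nat.gcd m n = (m + n) * c := hc
        _ = ((m + n) / Nat.gcd m n * Nat.gcd m n) * c := by rw [hNg]
        _ = ((m + n) / Nat.gcd m n * c) * Nat.gcd m n := by ring
    exact Nat.eq_of_mul_eq_mul_right hg0 h4
  exact dvd_trans ⟨c, hdc⟩ (Nat.gcd_dvd_left k (m + n))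
end

section
/- Let m, n be positive integers. The sum over all binary necklaces ω of type (m,n) of the weight w_N(ω) = gcd(m,n)/r(ω) equals gcd(m,n)/(m+n) * C(m+n, n). -/
section Aux

open Finset

lemma rot_add' (N a b : ℕ) (w : Fin N → Bool) :
    rotNat N a (rotNat N b w) = rotNat N (a + b) w := by
  rw [rot_rot]
  funext i
  simp only [rotNat]
  congr 1
  exact Fin.ext (by rw [Nat.add_assoc])

lemma mod_helper (N k a : ℕ) (hN : 0 < N) : (a + (N - k % N) + k) % N = a % N := by
  have h2 := Nat.div_add_mod k N
  have h3 := Nat.mod_lt k hN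
  have he : a + (N - k % N) + k = a + N * (1 + k / N) := by
    rw [Nat.mul_add, Nat.mul_one]; omega
  rw [he, Nat.add_mul_mod_self_left]

lemma rot_mod (N k : ℕ) (w : Fin N → Bool) : rotNat N (k % N) w = rotNat N k w := by
  funext i
  simp only [rotNat]
  congr 1
  exact Fin.ext (Nat.add_mod_mod _ _ _)

lemma rot_inv (N k : ℕ) (hN : 0 < N) (w : Fin N → Bool) :
    rotNat N (N - k % N) (rotNat N k w) = w := by
  rw [rot_add']
  funext i
  simp only [rotNat]
  congr 1
  refine Fin.ext ?_
  show (i.val + (N - k % N + k)) % N = i.val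
  rw [← Nat.add_assoc, mod_helper N k i.val hN, Nat.mod_eq_of_lt i.isLt]

lemma card_rot_fiber (N : ℕ) (hN : 0 < N) (w : Fin N → Bool) (k0 : ℕ) :
    (Finset.univ.filter (fun k : Fin N => rotNat N k.val w = rotNat N k0 w)).card
      = stabCard N w := by
  unfold stabCard
  apply Finset.card_bij'
    (i := fun k _ => (⟨(k.val + (N - k0 % N)) % N, Nat.mod_lt _ hN⟩ : Fin N))
    (j := fun k _ => (⟨(k.val + k0) % N, Nat.mod_lt _ hN⟩ : Fin N))
  · intro k hk
    simp only [Finset.mem_filter, Finset.mem_univ, true_and] at hk ⊢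
    show rotNat N ((k.val + (N - k0 % N)) % N) w = w
    rw [rot_mod, Nat.add_comm, ← rot_add', hk]
    exact rot_inv N k0 hN w
  · intro k hk
    simp only [Finset.mem_filter, Finset.mem_univ, true_and] at hk ⊢
    show rotNat N ((k.val + k0) % N) w = rotNat N k0 w
    rw [rot_mod, Nat.add_comm, ← rot_add', hk]
  · intro k hk
    refine Fin.ext ?_
    show ((k.val + (N - k0 % N)) % N + k0) % N = k.val
    rw [Nat.mod_add_mod, mod_helper N k0 k.val hN, Nat.mod_eq_of_lt k.isLt]
  · intro k hk
    refine Fin.ext ?_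
    show ((k.val + k0) % N + (N - k0 % N)) % N = k.val
    rw [Nat.mod_add_mod]
    have : k.val + k0 + (N - k0 % N) = k.val + (N - k0 % N) + k0 := by omega
    rw [this, mod_helper N k0 k.val hN, Nat.mod_eq_of_lt k.isLt]

lemma card_true_rot (N k : ℕ) (hN : 0 < N) (w : Fin N → Bool) :
    (Finset.univ.filter (fun i => rotNat N k w i = true)).card
      = (Finset.univ.filter (fun i => w i = true)).card := by
  apply Finset.card_bij'
    (i := fun i _ => (⟨(i.val + k) % N, Nat.mod_lt _ hN⟩ : Fin N))
    (j := fun i _ => (⟨(i.val + (N - k % N)) % N, Nat.mod_lt _ hN⟩ : Fin N))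
  · intro i hi
    simp only [Finset.coe_filter, Finset.mem_coe, Set.mem_setOf_eq, Finset.mem_filter, Finset.mem_univ, true_and, rotNat] at hi ⊢
    exact (Finset.mem_filter.mp hi).2
  · intro i hi
    simp only [Finset.coe_filter, Finset.mem_coe, Set.mem_setOf_eq, Finset.mem_filter, Finset.mem_univ, true_and, rotNat] at hi ⊢
    have : ((i.val + (N - k % N)) % N + k) % N = i.val := by
      rw [Nat.mod_add_mod, mod_helper N k i.val hN, Nat.mod_eq_of_lt i.isLt]
    refine Finset.mem_filter.mpr ⟨Finset.mem_univ _, ?_⟩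
    show w ⟨((i.val + (N - k % N)) % N + k) % N, Nat.mod_lt _ hN⟩ = true
    convert hi using 2
    exact Fin.ext this
  · intro i hi
    refine Fin.ext ?_
    show ((i.val + k) % N + (N - k % N)) % N = i.val
    rw [Nat.mod_add_mod]
    have : i.val + k + (N - k % N) = i.val + (N - k % N) + k := by omega
    rw [this, mod_helper N k i.val hN, Nat.mod_eq_of_lt i.isLt]
  · intro i hi
    refine Fin.ext ?_
    show ((i.val + (N - k % N)) % N + k) % N = i.val
    rw [Nat.mod_add_mod, mod_helper N k i.val hN, Nat.mod_eq_of_lt i.isLt]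

lemma isWord_rot (m n k : ℕ) (hN : 0 < m + n) {w : Fin (m + n) → Bool}
    (hw : IsWord m n w) : IsWord m n (rotNat (m + n) k w) := by
  unfold IsWord at hw ⊢
  rw [card_true_rot _ _ hN]
  exact hw

lemma card_words (m n : ℕ) :
    Fintype.card {w : Fin (m + n) → Bool // IsWord m n w} = (m + n).choose m := by
  rw [Fintype.card_subtype]
  have := Finset.card_powersetCard m (Finset.univ : Finset (Fin (m + n)))
  rw [Finset.card_univ, Fintype.card_fin] at this
  rw [← this]
  refine Finset.card_bij'
    (fun w _ => Finset.univ.filter (fun i => w i = true))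
    (fun s _ => fun i => decide (i ∈ s)) ?_ ?_ ?_ ?_
  · intro w hw
    simp only [Finset.mem_filter, Finset.mem_univ, true_and] at hw
    rw [Finset.mem_powersetCard]
    exact ⟨Finset.subset_univ _, hw⟩
  · intro s hs
    rw [Finset.mem_powersetCard] at hs
    simp only [Finset.mem_filter, Finset.mem_univ, true_and]
    show (Finset.univ.filter (fun i => decide (i ∈ s) = true)).card = m
    have hfe : Finset.univ.filter (fun i => decide (i ∈ s) = true) = s := by
      ext i; simp
    rw [hfe]
    exact hs.2
  · intro w hw
    funext i
    by_cases h : w i = true <;> simp [h]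
  · intro s hs
    ext i
    simp

lemma stabCard_pos (N : ℕ) (hN : 0 < N) (w : Fin N → Bool) : 0 < stabCard N w := by
  unfold stabCard
  refine Finset.card_pos.2 ⟨⟨0, hN⟩, ?_⟩
  simp only [Finset.mem_filter, Finset.mem_univ, true_and]
  exact rot_zero N w

lemma orbit_stab (m n : ℕ) (hN : 0 < m + n)
    (w : {w : Fin (m + n) → Bool // IsWord m n w}) :
    (Finset.univ.filter (fun w' : {w : Fin (m + n) → Bool // IsWord m n w} =>
        Quotient.mk (wordSetoid m n) w' = Quotient.mk (wordSetoid m n) w)).card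
      * stabCard (m + n) w.val = m + n := by
  classical
  have key := Finset.card_eq_sum_card_fiberwise
    (s := (Finset.univ : Finset (Fin (m + n))))
    (t := Finset.univ.filter (fun w' : {w : Fin (m + n) → Bool // IsWord m n w} =>
        Quotient.mk (wordSetoid m n) w' = Quotient.mk (wordSetoid m n) w))
    (f := fun k => (⟨rotNat (m + n) k.val w.val, isWord_rot m n k.val hN w.2⟩ :
      {w : Fin (m + n) → Bool // IsWord m n w}))
    (by
      intro k _
      simp only [Finset.coe_filter, Finset.mem_coe, Set.mem_setOf_eq, Finset.mem_filter, Finset.mem_univ, true_and]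
      apply Quotient.sound
      show rotRel (m + n) (rotNat (m + n) k.val w.val) w.val
      refine ⟨⟨m + n - k.val % (m + n), by omega⟩, ?_⟩
      exact rot_inv (m + n) k.val hN w.val)
  rw [Finset.card_univ, Fintype.card_fin] at key
  have key2 : ∀ b ∈ Finset.univ.filter
      (fun w' : {w : Fin (m + n) → Bool // IsWord m n w} =>
        Quotient.mk (wordSetoid m n) w' = Quotient.mk (wordSetoid m n) w),
      (Finset.univ.filter (fun k : Fin (m + n) =>
        (⟨rotNat (m + n) k.val w.val, isWord_rot m n k.val hN w.2⟩ :
          {w : Fin (m + n) → Bool // IsWord m n w}) = b)).card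
        = stabCard (m + n) w.val := by
    intro b hb
    simp only [Finset.mem_filter, Finset.mem_univ, true_and] at hb
    have hrel : rotRel (m + n) w.val b.val :=
      rotRel_symm (m + n) (Quotient.exact hb)
    obtain ⟨k0, hk0⟩ := hrel
    rw [← card_rot_fiber (m + n) hN w.val k0.val]
    congr 1
    apply Finset.filter_congr
    intro k _
    rw [hk0, Subtype.ext_iff]
  rw [Finset.sum_congr rfl key2, Finset.sum_const, smul_eq_mul] at key
  omega

end Aux

/-- Theorem 2: the sum over all binary necklaces `ω` of type `(m,n)` of the weight
`w_N(ω) = gcd(m,n)/r(ω)` equals `gcd(m,n)/(m+n) * C(m+n, n)`. -/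
theorem necklace_weighted_sum (m n : ℕ) (hm : 0 < m) (hn : 0 < n)
    (r : Necklace m n → ℕ)
    (hr : ∀ w : {w : Fin (m + n) → Bool // IsWord m n w},
      r (Quotient.mk (wordSetoid m n) w) = stabCard (m + n) w.val) :
    ∑ ω : Necklace m n, ((Nat.gcd m n : ℚ) / r ω)
      = (Nat.gcd m n : ℚ) / (m + n) * Nat.choose (m + n) n := by
  have hN : 0 < m + n := by omega
  letI : ∀ ω : Necklace m n, DecidablePred fun (w : {w : Fin (m + n) → Bool // IsWord m n w}) =>
      Quotient.mk (wordSetoid m n) w = ω := fun ω w =>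
    instDecidableEqQuotientSubtypeForallFinHAddNatBoolIsWordWordSetoid m n _ ω
  have step : ∀ ω : Necklace m n, ((Nat.gcd m n : ℚ) / r ω)
      = ∑ w ∈ Finset.univ.filter (fun w : {w : Fin (m + n) → Bool // IsWord m n w} =>
          Quotient.mk (wordSetoid m n) w = ω), ((Nat.gcd m n : ℚ) / (m + n)) := by
    refine Quotient.ind ?_
    intro w
    rw [Finset.sum_const, hr w, nsmul_eq_mul]
    have hos := orbit_stab m n hN w
    have hstab : 0 < stabCard (m + n) w.val := stabCard_pos (m + n) hN w.val
    have hc : 0 < (Finset.univ.filter (fun w' : {w : Fin (m + n) → Bool // IsWord m n w} =>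
        Quotient.mk (wordSetoid m n) w' = Quotient.mk (wordSetoid m n) w)).card := by
      refine Finset.card_pos.2 ⟨w, ?_⟩
      simp only [Finset.mem_filter, Finset.mem_univ, true_and]
    have hcast : ((m : ℚ) + n) =
        ((Finset.univ.filter (fun w' : {w : Fin (m + n) → Bool // IsWord m n w} =>
          Quotient.mk (wordSetoid m n) w' = Quotient.mk (wordSetoid m n) w)).card : ℚ)
          * (stabCard (m + n) w.val : ℚ) := by
      exact_mod_cast hos.symm
    have h2 : ((Finset.univ.filter (fun w' : {w : Fin (m + n) → Bool // IsWord m n w} =>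
        Quotient.mk (wordSetoid m n) w' = Quotient.mk (wordSetoid m n) w)).card : ℚ) ≠ 0 := by
      positivity
    rw [hcast, mul_div_assoc', mul_div_mul_left _ _ h2]
  rw [Finset.sum_congr rfl (fun ω _ => step ω)]
  letI : DecidableEq (Necklace m n) :=
    instDecidableEqQuotientSubtypeForallFinHAddNatBoolIsWordWordSetoid m n
  rw [show (∑ ω : Necklace m n, ∑ w ∈ Finset.univ.filter
      (fun w : {w : Fin (m + n) → Bool // IsWord m n w} => Quotient.mk (wordSetoid m n) w = ω),
      ((Nat.gcd m n : ℚ) / (m + n))) = ∑ w : {w : Fin (m + n) → Bool // IsWord m n w},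
      ((Nat.gcd m n : ℚ) / (m + n)) from Finset.sum_fiberwise Finset.univ _ _]
  rw [Finset.sum_const, Finset.card_univ, card_words, nsmul_eq_mul]
  have : (m + n).choose m = (m + n).choose n := Nat.choose_symm_add
  rw [this]
  ring
end

section
/- Cycle Lemma (Dvoretzky–Motzkin, rational version): Let m, n be positive integers and let w be any word consisting of m up-steps and n right-steps, arranged cyclically. Then the number of cyclic rotations of w that are (m,n)-Dyck words equals the number of anchor points (other than the starting point) of the path of any Dyck rotation of w; in particular, if gcd(m,n)=1, exactly one cyclic rotation of w is an (m,n)-Dyck word. -/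
/-- Number of up-steps among the first `t` steps of the word `w`. -/
def ups (N : ℕ) (w : Fin N → Bool) (t : ℕ) : ℕ :=
  (Finset.univ.filter (fun i : Fin N => i.val < t ∧ w i = true)).card

/-- Number of right-steps among the first `t` steps of the word `w`. -/
def rights (N : ℕ) (w : Fin N → Bool) (t : ℕ) : ℕ :=
  (Finset.univ.filter (fun i : Fin N => i.val < t ∧ w i = false)).card

/-- An `(m,n)`-Dyck word: `m` up-steps (`true`) and `n` right-steps (`false`) such that
every prefix with `i` ups and `j` rights satisfies `m * j ≤ n * i`
(the path stays weakly above the diagonal `m·x = n·y`). -/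
def IsDyck (m n : ℕ) (w : Fin (m + n) → Bool) : Prop :=
  IsWord m n w ∧ ∀ t ≤ m + n, m * rights (m + n) w t ≤ n * ups (m + n) w t

instance (m n : ℕ) : DecidablePred (IsDyck m n) := fun _ => by
  unfold IsDyck; infer_instance

/-- The anchors of `w` away from the origin: the indices `1 ≤ t ≤ m+n` such that the vertex
`(j, i) = (rights w t, ups w t)` reached after `t` steps lies on the diagonal `m·x = n·y`. -/
def anchors (m n : ℕ) (w : Fin (m + n) → Bool) : Finset ℕ :=
  (Finset.Icc 1 (m + n)).filter
    (fun t => m * rights (m + n) w t = n * ups (m + n) w t)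

/-! ### Auxiliary development for the cycle lemma -/

namespace CycleLemmaAux

open Finset

/-- Number of `true`s of the (periodically extended) word `f` in the window `[k, k+t)`. -/
def cnt (f : ℕ → Bool) (k t : ℕ) : ℕ :=
  ((Finset.range t).filter (fun i => f (i + k) = true)).card

lemma cnt_le (f : ℕ → Bool) (k t : ℕ) : cnt f k t ≤ t := by
  calc cnt f k t ≤ (Finset.range t).card := Finset.card_filter_le _ _
    _ = t := Finset.card_range t

lemma cnt_succ (f : ℕ → Bool) (k t : ℕ) :
    cnt f k (t + 1) = cnt f k t + (if f (t + k) = true then 1 else 0) := by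
  unfold cnt
  rw [Finset.range_add_one, Finset.filter_insert]
  by_cases h : f (t + k) = true
  · rw [if_pos h, if_pos h, Finset.card_insert_of_notMem (by simp)]
  · rw [if_neg h, if_neg h, add_zero]

lemma cnt_add (f : ℕ → Bool) (k s t : ℕ) :
    cnt f k (s + t) = cnt f k s + cnt f (k + s) t := by
  induction t with
  | zero => simp [cnt]
  | succ t ih =>
      have e1 : s + (t + 1) = (s + t) + 1 := by omega
      have e2 : (s + t) + k = t + (k + s) := by omega
      rw [e1, cnt_succ, ih, cnt_succ, e2]
      omega

lemma cnt_shift (f : ℕ → Bool) {N : ℕ} (hper : ∀ i, f (i + N) = f i) (k t : ℕ) :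
    cnt f (k + N) t = cnt f k t := by
  unfold cnt
  congr 1
  apply Finset.filter_congr
  intro i _
  have : i + (k + N) = (i + k) + N := by omega
  rw [this, hper]

lemma cnt_one (f : ℕ → Bool) (k : ℕ) : cnt f k 1 = if f k = true then 1 else 0 := by
  have := cnt_succ f k 0
  simpa [cnt] using this

/-- Every window of length `N` contains the same number of `true`s. -/
lemma cnt_window (f : ℕ → Bool) {N : ℕ} (hper : ∀ i, f (i + N) = f i) (k : ℕ) :
    cnt f k N = cnt f 0 N := by
  induction k with
  | zero => rfl
  | succ k ih =>
      have h1 : cnt f k (1 + N) = cnt f k 1 + cnt f (k + 1) N := cnt_add f k 1 N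
      have h2 : cnt f k (N + 1) = cnt f k N + cnt f (k + N) 1 := cnt_add f k N 1
      have h3 : cnt f (k + N) 1 = cnt f k 1 := by
        rw [cnt_one, cnt_one, hper]
      rw [show 1 + N = N + 1 by omega] at h1
      omega

/-- The integer "height" of the path of `f` over the window `[k, k+t)`,
namely `(m+n) * (#ups) - m * t = n * (#ups) - m * (#rights)`. -/
def hh (m n : ℕ) (f : ℕ → Bool) (k t : ℕ) : ℤ :=
  ((m : ℤ) + n) * cnt f k t - m * t

/-- The height at position `k` of the path starting at the origin. -/
def G (m n : ℕ) (f : ℕ → Bool) (k : ℕ) : ℤ := hh m n f 0 k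

lemma hh_add (m n : ℕ) (f : ℕ → Bool) (k s t : ℕ) :
    hh m n f k (s + t) = hh m n f k s + hh m n f (k + s) t := by
  unfold hh
  rw [cnt_add]
  push_cast
  ring

lemma G_add (m n : ℕ) (f : ℕ → Bool) (k t : ℕ) :
    G m n f (k + t) = G m n f k + hh m n f k t := by
  have := hh_add m n f 0 k t
  simpa [G] using this

lemma hh_period (m n : ℕ) (f : ℕ → Bool) (hper : ∀ i, f (i + (m + n)) = f i)
    (hful : cnt f 0 (m + n) = m) (k : ℕ) : hh m n f k (m + n) = 0 := by
  unfold hh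
  rw [cnt_window f hper k, hful]
  push_cast
  ring

lemma G_period (m n : ℕ) (f : ℕ → Bool) (hper : ∀ i, f (i + (m + n)) = f i)
    (hful : cnt f 0 (m + n) = m) (k : ℕ) : G m n f (k + (m + n)) = G m n f k := by
  rw [G_add, hh_period m n f hper hful, add_zero]

lemma G_mod (m n : ℕ) (f : ℕ → Bool) (hper : ∀ i, f (i + (m + n)) = f i)
    (hful : cnt f 0 (m + n) = m) (hN : 0 < m + n) (k : ℕ) :
    G m n f k = G m n f (k % (m + n)) := by
  have key : ∀ q r, G m n f (r + q * (m + n)) = G m n f r := by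
    intro q
    induction q with
    | zero => intro r; simp
    | succ q ih =>
        intro r
        have : r + (q + 1) * (m + n) = (r + q * (m + n)) + (m + n) := by ring
        rw [this, G_period m n f hper hful, ih]
  conv_lhs => rw [show k = k % (m + n) + (k / (m + n)) * (m + n) by
    rw [Nat.mod_add_div']]
  rw [key]

lemma filter_and_lt (N t : ℕ) (ht : t ≤ N) (p : ℕ → Prop) [DecidablePred p] :
    (Finset.range N).filter (fun j => j < t ∧ p j) = (Finset.range t).filter p := by
  ext j
  simp only [Finset.mem_filter, Finset.mem_range]
  constructor
  · rintro ⟨-, h1, h2⟩; exact ⟨h1, h2⟩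
  · rintro ⟨h1, h2⟩; exact ⟨lt_of_lt_of_le h1 ht, h1, h2⟩

/-- Converting a `Fin`-indexed prefix count to a `range`-indexed count. -/
lemma count_eq {N : ℕ} (w' : Fin N → Bool) (g : ℕ → Bool)
    (hg : ∀ i : Fin N, w' i = g i.val) (b : Bool) (t : ℕ) (ht : t ≤ N) :
    (Finset.univ.filter (fun i : Fin N => i.val < t ∧ w' i = b)).card
      = ((Finset.range t).filter (fun j => g j = b)).card := by
  calc (Finset.univ.filter (fun i : Fin N => i.val < t ∧ w' i = b)).card
      = ∑ i : Fin N, if i.val < t ∧ g i.val = b then 1 else 0 := by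
        rw [Finset.card_filter]
        exact Finset.sum_congr rfl (fun i _ => by simp [hg])
    _ = ∑ j ∈ Finset.range N, if j < t ∧ g j = b then 1 else 0 :=
        Fin.sum_univ_eq_sum_range (fun j => if j < t ∧ g j = b then 1 else 0) N
    _ = ((Finset.range N).filter (fun j => j < t ∧ g j = b)).card :=
        (Finset.card_filter _ _).symm
    _ = ((Finset.range t).filter (fun j => g j = b)).card := by
        rw [filter_and_lt N t ht]

lemma word_count {N : ℕ} (w' : Fin N → Bool) (g : ℕ → Bool)
    (hg : ∀ i : Fin N, w' i = g i.val) (b : Bool) :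
    (Finset.univ.filter (fun i : Fin N => w' i = b)).card
      = ((Finset.range N).filter (fun j => g j = b)).card := by
  calc (Finset.univ.filter (fun i : Fin N => w' i = b)).card
      = ∑ i : Fin N, if g i.val = b then 1 else 0 := by
        rw [Finset.card_filter]
        exact Finset.sum_congr rfl (fun i _ => by simp [hg])
    _ = ∑ j ∈ Finset.range N, if g j = b then 1 else 0 :=
        Fin.sum_univ_eq_sum_range (fun j => if g j = b then 1 else 0) N
    _ = ((Finset.range N).filter (fun j => g j = b)).card :=
        (Finset.card_filter _ _).symm

end CycleLemmaAux

open CycleLemmaAux Finset in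
/-- Cycle Lemma (Dvoretzky–Motzkin, rational version). -/
theorem cycle_lemma (m n : ℕ) (hm : 0 < m) (hn : 0 < n)
    (w : Fin (m + n) → Bool) (hw : IsWord m n w) :
    (∀ k : Fin (m + n), IsDyck m n (rotNat (m + n) k.val w) →
      (Finset.univ.filter
          (fun j : Fin (m + n) => IsDyck m n (rotNat (m + n) j.val w))).card
        = (anchors m n (rotNat (m + n) k.val w)).card) ∧
    (Nat.gcd m n = 1 →
      (Finset.univ.filter
          (fun j : Fin (m + n) => IsDyck m n (rotNat (m + n) j.val w))).card = 1) := by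
  have hN : 0 < m + n := by omega
  -- the periodic extension of `w`
  set f : ℕ → Bool := fun j => w ⟨j % (m + n), Nat.mod_lt j hN⟩ with hf
  have hper : ∀ i, f (i + (m + n)) = f i := by
    intro i; simp [hf, Nat.add_mod_right]
  -- rotations expressed via `f`
  have hrot : ∀ k : ℕ, ∀ i : Fin (m + n), rotNat (m + n) k w i = f (i.val + k) := by
    intro k i; rfl
  -- the full window contains `m` ups
  have hful : cnt f 0 (m + n) = m := by
    have h0 : ∀ i : Fin (m + n), w i = f i.val := by
      intro i
      simp only [hf]
      congr 1
      exact (Fin.ext (Nat.mod_eq_of_lt i.isLt)).symm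
    have h1 := word_count w f h0 true
    unfold IsWord at hw
    unfold cnt
    simp only [Nat.add_zero]
    rw [← h1, hw]
  have hfulk : ∀ k, cnt f k (m + n) = m := fun k => by rw [cnt_window f hper k, hful]
  -- prefix counts of rotations
  have hups : ∀ (k : ℕ) (t : ℕ), t ≤ m + n → ups (m + n) (rotNat (m + n) k w) t = cnt f k t := by
    intro k t ht
    unfold ups
    exact count_eq (rotNat (m + n) k w) (fun j => f (j + k)) (fun i => hrot k i) true t ht
  have hrights : ∀ (k : ℕ) (t : ℕ), t ≤ m + n →
      ups (m + n) (rotNat (m + n) k w) t + rights (m + n) (rotNat (m + n) k w) t = t := by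
    intro k t ht
    unfold ups rights
    rw [count_eq (rotNat (m + n) k w) (fun j => f (j + k)) (fun i => hrot k i) true t ht,
        count_eq (rotNat (m + n) k w) (fun j => f (j + k)) (fun i => hrot k i) false t ht]
    have hne : (Finset.range t).filter (fun j => f (j + k) = false)
        = (Finset.range t).filter (fun j => ¬ (f (j + k) = true)) := by
      apply Finset.filter_congr; intro j _; simp
    rw [hne]
    have h2 := Finset.card_filter_add_card_filter_not
      (s := Finset.range t) (p := fun j => f (j + k) = true)
    rw [Finset.card_range] at h2
    exact h2
  -- every rotation is a word
  have hword : ∀ k : ℕ, IsWord m n (rotNat (m + n) k w) := by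
    intro k
    unfold IsWord
    rw [word_count (rotNat (m + n) k w) (fun j => f (j + k)) (fun i => hrot k i) true]
    exact hfulk k
  -- the prefix inequality in terms of heights
  have hineq : ∀ (k t : ℕ), t ≤ m + n →
      ((m * rights (m + n) (rotNat (m + n) k w) t ≤ n * ups (m + n) (rotNat (m + n) k w) t) ↔
        0 ≤ hh m n f k t) := by
    intro k t ht
    have h1 := hups k t ht
    have h2 := hrights k t ht
    have h3 : cnt f k t ≤ t := cnt_le f k t
    rw [h1] at h2 ⊢
    have h4 : rights (m + n) (rotNat (m + n) k w) t = t - cnt f k t := by omega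
    rw [h4]
    unfold hh
    have h5 : ((t - cnt f k t : ℕ) : ℤ) = (t : ℤ) - cnt f k t := by
      push_cast [Nat.cast_sub h3]; ring
    constructor
    · intro h
      have h6 : (m : ℤ) * ((t : ℤ) - cnt f k t) ≤ n * cnt f k t := by
        rw [← h5]; exact_mod_cast h
      nlinarith [h6]
    · intro h
      have h6 : (m : ℤ) * ((t : ℤ) - cnt f k t) ≤ n * cnt f k t := by nlinarith [h]
      rw [← h5] at h6
      exact_mod_cast h6
  -- same, for the anchor equality
  have heqiff : ∀ (k t : ℕ), t ≤ m + n →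
      ((m * rights (m + n) (rotNat (m + n) k w) t = n * ups (m + n) (rotNat (m + n) k w) t) ↔
        hh m n f k t = 0) := by
    intro k t ht
    have h1 := hups k t ht
    have h2 := hrights k t ht
    have h3 : cnt f k t ≤ t := cnt_le f k t
    rw [h1] at h2 ⊢
    have h4 : rights (m + n) (rotNat (m + n) k w) t = t - cnt f k t := by omega
    rw [h4]
    unfold hh
    have h5 : ((t - cnt f k t : ℕ) : ℤ) = (t : ℤ) - cnt f k t := by
      push_cast [Nat.cast_sub h3]; ring
    constructor
    · intro h
      have h6 : (m : ℤ) * ((t : ℤ) - cnt f k t) = n * cnt f k t := by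
        rw [← h5]; exact_mod_cast h
      nlinarith [h6]
    · intro h
      have h6 : (m : ℤ) * ((t : ℤ) - cnt f k t) = n * cnt f k t := by nlinarith [h]
      rw [← h5] at h6
      exact_mod_cast h6
  -- a rotation is Dyck iff its starting height is minimal
  have dyck_iff : ∀ j : Fin (m + n), IsDyck m n (rotNat (m + n) j.val w) ↔
      ∀ i : Fin (m + n), G m n f j.val ≤ G m n f i.val := by
    intro j
    constructor
    · rintro ⟨-, hD⟩ i
      by_cases hij : j.val ≤ i.val
      · have ht : i.val - j.val ≤ m + n := by omega
        have h1 := (hineq j.val (i.val - j.val) ht).1 (hD _ ht)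
        have hG := G_add m n f j.val (i.val - j.val)
        have h2 : G m n f (j.val + (i.val - j.val)) ≥ G m n f j.val := by omega
        rwa [show j.val + (i.val - j.val) = i.val by omega] at h2
      · have hjlt := j.isLt
        have ht : i.val + (m + n) - j.val ≤ m + n := by omega
        have h1 := (hineq j.val (i.val + (m + n) - j.val) ht).1 (hD _ ht)
        have hG := G_add m n f j.val (i.val + (m + n) - j.val)
        have h2 : G m n f (j.val + (i.val + (m + n) - j.val)) ≥ G m n f j.val := by omega
        rw [show j.val + (i.val + (m + n) - j.val) = i.val + (m + n) by omega,
            G_period m n f hper hful] at h2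
        exact h2
    · intro hmin
      refine ⟨hword j.val, ?_⟩
      intro t ht
      rw [hineq j.val t ht]
      have hG := G_add m n f j.val t
      have h1 : G m n f (j.val + t) = G m n f ((j.val + t) % (m + n)) :=
        G_mod m n f hper hful hN _
      have h2 := hmin ⟨(j.val + t) % (m + n), Nat.mod_lt _ hN⟩
      simp only at h2
      omega
  -- Part 1
  have part1 : ∀ k : Fin (m + n), IsDyck m n (rotNat (m + n) k.val w) →
      (Finset.univ.filter
          (fun j : Fin (m + n) => IsDyck m n (rotNat (m + n) j.val w))).card
        = (anchors m n (rotNat (m + n) k.val w)).card := by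
    intro k hk
    have hkmin : ∀ i : Fin (m + n), G m n f k.val ≤ G m n f i.val := (dyck_iff k).1 hk
    have hdset : Finset.univ.filter (fun j : Fin (m + n) => IsDyck m n (rotNat (m + n) j.val w))
        = Finset.univ.filter (fun j : Fin (m + n) => G m n f j.val = G m n f k.val) := by
      apply Finset.filter_congr
      intro j _
      rw [dyck_iff j]
      constructor
      · intro h; exact le_antisymm (h k) (hkmin j)
      · intro h i; rw [h]; exact hkmin i
    have hanch : anchors m n (rotNat (m + n) k.val w)
        = (Finset.Icc 1 (m + n)).filter
            (fun t => G m n f (k.val + t) = G m n f k.val) := by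
      unfold anchors
      apply Finset.filter_congr
      intro t ht
      simp only [Finset.mem_Icc] at ht
      rw [heqiff k.val t ht.2]
      have hG := G_add m n f k.val t
      constructor
      · intro h; omega
      · intro h; omega
    rw [hdset, hanch]
    symm
    apply Finset.card_bij (fun t _ => (⟨(k.val + t) % (m + n), Nat.mod_lt _ hN⟩ : Fin (m + n)))
    · intro t ht
      simp only [Finset.mem_filter, Finset.mem_Icc] at ht ⊢
      refine ⟨Finset.mem_univ _, ?_⟩
      have hGm := G_mod m n f hper hful hN (k.val + t)
      omega
    · intro t ht t' ht' he
      simp only [Finset.mem_filter, Finset.mem_Icc] at ht ht'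
      have he' : (k.val + t) % (m + n) = (k.val + t') % (m + n) := by
        simpa using congrArg Fin.val he
      have h1 : t ≡ t' [MOD (m + n)] := Nat.ModEq.add_left_cancel' k.val he'
      have h2 : ((m + n : ℕ) : ℤ) ∣ (t' : ℤ) - t := h1.dvd
      have h3 := Int.eq_zero_of_abs_lt_dvd h2 (by rw [abs_sub_lt_iff]; constructor <;> · push_cast; omega)
      omega
    · intro j hj
      simp only [Finset.mem_filter] at hj
      have hjN := j.isLt
      have hkN := k.isLt
      refine ⟨if k.val < j.val then j.val - k.val else j.val + (m + n) - k.val, ?_, ?_⟩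
      · simp only [Finset.mem_filter, Finset.mem_Icc]
        refine ⟨by split <;> omega, ?_⟩
        have hcase : k.val + (if k.val < j.val then j.val - k.val else j.val + (m + n) - k.val)
            = j.val ∨ k.val + (if k.val < j.val then j.val - k.val else j.val + (m + n) - k.val)
            = j.val + (m + n) := by split <;> omega
        rcases hcase with h | h
        · rw [h, hj.2]
        · rw [h, G_period m n f hper hful, hj.2]
      · apply Fin.ext
        simp only
        have hcase : k.val + (if k.val < j.val then j.val - k.val else j.val + (m + n) - k.val)
            = j.val ∨ k.val + (if k.val < j.val then j.val - k.val else j.val + (m + n) - k.val)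
            = j.val + (m + n) := by split <;> omega
        rcases hcase with h | h
        · rw [h, Nat.mod_eq_of_lt hjN]
        · rw [h, Nat.add_mod_right, Nat.mod_eq_of_lt hjN]
  constructor
  · exact part1
  -- Part 2
  · intro hg
    obtain ⟨k0, -, hk0⟩ := Finset.exists_min_image (Finset.univ : Finset (Fin (m + n)))
      (fun j => G m n f j.val) ⟨⟨0, hN⟩, Finset.mem_univ _⟩
    have hdy : IsDyck m n (rotNat (m + n) k0.val w) :=
      (dyck_iff k0).2 (fun i => hk0 i (Finset.mem_univ i))
    rw [part1 k0 hdy]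
    have hsing : anchors m n (rotNat (m + n) k0.val w) = {m + n} := by
      ext t
      simp only [anchors, Finset.mem_filter, Finset.mem_Icc, Finset.mem_singleton]
      constructor
      · rintro ⟨⟨ht1, ht2⟩, heq⟩
        have hu := hups k0.val t ht2
        have hur := hrights k0.val t ht2
        rw [hu] at heq hur
        obtain ⟨c, hcdef⟩ : ∃ c, cnt f k0.val t = c := ⟨_, rfl⟩
        rw [hcdef] at heq hur
        have hcm : c ≤ m := by
          have h7 := cnt_add f k0.val t ((m + n) - t)
          rw [show t + ((m + n) - t) = m + n by omega, hfulk, hcdef] at h7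
          omega
        have hR : rights (m + n) (rotNat (m + n) k0.val w) t = t - c := by omega
        rw [hR] at heq
        -- heq : m * (t - c) = n * c
        have h2 : Nat.Coprime m n := hg
        have hdvd : m ∣ c := h2.dvd_of_dvd_mul_left ⟨t - c, heq.symm⟩
        rcases hdvd with ⟨q, hq⟩
        have hq1 : q ≤ 1 := by
          by_contra hcon
          push_neg at hcon
          have h2m : 2 * m ≤ c := by
            calc 2 * m = m * 2 := by ring
              _ ≤ m * q := Nat.mul_le_mul_left m hcon
              _ = c := hq.symm
          omega
        interval_cases q
        · have hc0 : c = 0 := by omega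
          rw [hc0, Nat.mul_zero] at heq
          rcases Nat.mul_eq_zero.mp heq with h | h <;> omega
        · have hc1 : c = m := by omega
          rw [hc1] at heq
          have h9 : t - m = n := Nat.eq_of_mul_eq_mul_left hm (by rw [heq]; ring)
          omega
      · rintro rfl
        refine ⟨⟨by omega, le_refl _⟩, ?_⟩
        have hu := hups k0.val (m + n) (le_refl (m + n))
        have hur := hrights k0.val (m + n) (le_refl (m + n))
        rw [hfulk] at hu
        have hR : rights (m + n) (rotNat (m + n) k0.val w) (m + n) = n := by omega
        rw [hu, hR]
        ring
    rw [hsing, Finset.card_singleton]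
end

section
/- Let m, n be coprime positive integers. Then the number of (m,n)-Dyck words equals (1/(m+n)) * C(m+n, n). -/
namespace RC

variable {N : ℕ}

lemma rot_rot (a b : ℕ) (w : Fin N → Bool) :
    rotNat N a (rotNat N b w) = rotNat N (b + a) w := by
  funext i
  simp only [rotNat]
  congr 1
  apply Fin.ext
  show ((i.val + a) % N + b) % N = (i.val + (b + a)) % N
  rw [Nat.mod_add_mod]
  congr 1
  omega

lemma rot_mod (k : ℕ) (w : Fin N → Bool) :
    rotNat N (k % N) w = rotNat N k w := by
  funext i
  simp only [rotNat]
  congr 1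
  apply Fin.ext
  show (i.val + k % N) % N = (i.val + k) % N
  conv_rhs => rw [Nat.add_mod]
  rw [Nat.add_mod, Nat.mod_mod_of_dvd]
  exact dvd_refl N

lemma rot_self (w : Fin N → Bool) : rotNat N N w = w := by
  funext i
  simp only [rotNat]
  congr 1
  apply Fin.ext
  show (i.val + N) % N = i.val
  rw [Nat.add_mod_right, Nat.mod_eq_of_lt i.isLt]

lemma rot_zero (w : Fin N → Bool) : rotNat N 0 w = w := by
  funext i
  simp only [rotNat]
  congr 1
  apply Fin.ext
  show (i.val + 0) % N = i.val
  rw [Nat.add_zero, Nat.mod_eq_of_lt i.isLt]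

end RC
namespace RC

variable {N : ℕ}

lemma card_lt {t : ℕ} (ht : t ≤ N) :
    (Finset.univ.filter (fun i : Fin N => i.val < t)).card = t := by
  have : (Finset.univ.filter (fun i : Fin N => i.val < t)).card = (Finset.range t).card := by
    apply Finset.card_bij' (fun i _ => i.val)
      (fun j hj => (⟨j, lt_of_lt_of_le (Finset.mem_range.mp hj) ht⟩ : Fin N))
    case hi =>
      intro i hi
      simp only [Finset.mem_filter] at hi
      exact Finset.mem_range.mpr hi.2
    case hj =>
      intro j hj
      simp only [Finset.mem_filter, Finset.mem_univ, true_and]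
      exact Finset.mem_range.mp hj
    case left_inv => intros; rfl
    case right_inv => intros; rfl
  rw [this, Finset.card_range]

lemma ups_add_rights (w : Fin N → Bool) {t : ℕ} (ht : t ≤ N) :
    ups N w t + rights N w t = t := by
  unfold ups rights
  have h1 : (Finset.univ.filter (fun i : Fin N => i.val < t ∧ w i = true))
      = (Finset.univ.filter (fun i : Fin N => i.val < t)).filter (fun i => w i = true) := by
    rw [Finset.filter_filter]
  have h2 : (Finset.univ.filter (fun i : Fin N => i.val < t ∧ w i = false))
      = (Finset.univ.filter (fun i : Fin N => i.val < t)).filter (fun i => ¬ (w i = true)) := by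
    rw [Finset.filter_filter]
    apply Finset.filter_congr
    intro i _
    simp [Bool.not_eq_true]
  rw [h1, h2, Finset.card_filter_add_card_filter_not, card_lt ht]

lemma ups_mono (w : Fin N → Bool) {s t : ℕ} (hst : s ≤ t) :
    ups N w s ≤ ups N w t := by
  apply Finset.card_le_card
  intro i hi
  simp only [Finset.mem_filter] at hi ⊢
  exact ⟨hi.1, lt_of_lt_of_le hi.2.1 hst, hi.2.2⟩

lemma ups_le (w : Fin N → Bool) (t : ℕ) : ups N w t ≤ t := by
  rcases le_or_gt t N with ht | ht
  · have := ups_add_rights w ht; omega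
  · calc ups N w t ≤ (Finset.univ : Finset (Fin N)).card := Finset.card_le_card (Finset.filter_subset _ _)
    _ = N := by simp
    _ ≤ t := ht.le

lemma ups_split (w : Fin N → Bool) {a t : ℕ} (hat : a ≤ t) :
    ups N w t = ups N w a +
      (Finset.univ.filter (fun i : Fin N => a ≤ i.val ∧ i.val < t ∧ w i = true)).card := by
  unfold ups
  rw [← Finset.card_filter_add_card_filter_not
    (s := Finset.univ.filter (fun i : Fin N => i.val < t ∧ w i = true))
    (p := fun i => i.val < a)]
  congr 1
  · rw [Finset.filter_filter]
    congr 1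
    ext i
    simp only [Finset.mem_filter, Finset.mem_univ, true_and]
    constructor
    · rintro ⟨⟨_, hw⟩, ha⟩; exact ⟨ha, hw⟩
    · rintro ⟨ha, hw⟩; exact ⟨⟨lt_of_lt_of_le ha hat, hw⟩, ha⟩
  · rw [Finset.filter_filter]
    congr 1
    ext i
    simp only [Finset.mem_filter, Finset.mem_univ, true_and]
    constructor
    · rintro ⟨⟨h1, hw⟩, h2⟩; exact ⟨by omega, h1, hw⟩
    · rintro ⟨h1, h2, hw⟩; exact ⟨⟨h2, hw⟩, by omega⟩

end RC
namespace RC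

variable {N : ℕ}

lemma ups_rot_low (w : Fin N → Bool) {k t : ℕ} (h : k + t ≤ N) :
    ups N w (k + t) = ups N w k + ups N (rotNat N k w) t := by
  have key : (Finset.univ.filter (fun i : Fin N => k ≤ i.val ∧ i.val < k + t ∧ w i = true)).card
      = (Finset.univ.filter (fun j : Fin N => j.val < t ∧ rotNat N k w j = true)).card := by
    apply Finset.card_bij' (fun i _ => (⟨i.val - k, lt_of_le_of_lt (Nat.sub_le _ _) i.isLt⟩ : Fin N))
      (fun j hj => (⟨j.val + k, by
        simp only [Finset.mem_filter] at hj; omega⟩ : Fin N))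
    case hi =>
      intro i hi
      simp only [Finset.mem_filter, Finset.mem_univ, true_and] at hi ⊢
      refine ⟨by omega, ?_⟩
      have hv : (i.val - k + k) % N = i.val := by
        rw [Nat.sub_add_cancel hi.1, Nat.mod_eq_of_lt i.isLt]
      show w _ = true
      convert hi.2.2 using 2
      exact Fin.ext hv
    case hj =>
      intro j hj
      simp only [Finset.mem_filter, Finset.mem_univ, true_and] at hj ⊢
      refine ⟨by omega, by omega, ?_⟩
      have hv : (j.val + k) % N = j.val + k := Nat.mod_eq_of_lt (by omega)
      have := hj.2
      show w _ = true
      rw [show (⟨j.val + k, _⟩ : Fin N) = ⟨(j.val + k) % N, Nat.mod_lt _ j.pos⟩ from Fin.ext hv.symm]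
      exact this
    case left_inv =>
      intro i hi
      simp only [Finset.mem_filter] at hi
      exact Fin.ext (by simp; omega)
    case right_inv =>
      intro j hj
      exact Fin.ext (by simp)
  rw [ups_split w (Nat.le_add_right k t)]
  congr 1

end RC

namespace RC

variable {N : ℕ}

lemma ups_rot_high (w : Fin N → Bool) {k s : ℕ} (hk : k ≤ N) (hs : s ≤ k) :
    ups N (rotNat N k w) (N - k + s) = ups N (rotNat N k w) (N - k) + ups N w s := by
  have key : (Finset.univ.filter
        (fun i : Fin N => N - k ≤ i.val ∧ i.val < N - k + s ∧ rotNat N k w i = true)).card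
      = (Finset.univ.filter (fun j : Fin N => j.val < s ∧ w j = true)).card := by
    apply Finset.card_bij'
      (fun i _ => (⟨i.val - (N - k), lt_of_le_of_lt (Nat.sub_le _ _) i.isLt⟩ : Fin N))
      (fun j hj => (⟨j.val + (N - k), by
        simp only [Finset.mem_filter] at hj
        have := j.isLt; omega⟩ : Fin N))
    case hi =>
      intro i hi
      simp only [Finset.mem_filter, Finset.mem_univ, true_and] at hi ⊢
      refine ⟨by omega, ?_⟩
      have hw := hi.2.2
      unfold rotNat at hw
      have hv : (i.val + k) % N = i.val - (N - k) := by
        have h1 : N ≤ i.val + k := by omega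
        have h2 : i.val + k < 2 * N := by have := i.isLt; omega
        rw [Nat.mod_eq_sub_mod h1, Nat.mod_eq_of_lt (by omega)]
        omega
      show w _ = true
      convert hw using 2
      exact Fin.ext hv.symm
    case hj =>
      intro j hj
      simp only [Finset.mem_filter, Finset.mem_univ, true_and] at hj ⊢
      have hjN := j.isLt
      refine ⟨by omega, by omega, ?_⟩
      show rotNat N k w _ = true
      unfold rotNat
      have hv : (j.val + (N - k) + k) % N = j.val := by
        have e : j.val + (N - k) + k = j.val + N := by omega
        rw [e, Nat.add_mod_right, Nat.mod_eq_of_lt hjN]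
      convert hj.2 using 2
      exact Fin.ext hv
    case left_inv =>
      intro i hi
      simp only [Finset.mem_filter] at hi
      exact Fin.ext (by simp; omega)
    case right_inv =>
      intro j hj
      exact Fin.ext (by simp)
  rw [ups_split (rotNat N k w) (Nat.le_add_right (N - k) s)]
  congr 1

end RC
namespace RC

def fval (m n : ℕ) (w : Fin (m + n) → Bool) (t : ℕ) : ℤ :=
  ((m + n : ℕ) : ℤ) * (ups (m + n) w t : ℤ) - (m : ℤ) * t

variable {m n : ℕ}

lemma isWord_iff {w : Fin (m + n) → Bool} : IsWord m n w ↔ ups (m + n) w (m + n) = m := by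
  unfold IsWord ups
  have : (Finset.univ.filter (fun i : Fin (m + n) => i.val < m + n ∧ w i = true))
      = (Finset.univ.filter (fun i : Fin (m + n) => w i = true)) := by
    ext i
    simp [i.isLt]
  rw [this]

lemma ups_zero (w : Fin (m + n) → Bool) : ups (m + n) w 0 = 0 := by
  unfold ups
  simp

lemma fval_zero (w : Fin (m + n) → Bool) : fval m n w 0 = 0 := by
  unfold fval
  rw [ups_zero]
  simp

lemma fval_top {w : Fin (m + n) → Bool} (hw : IsWord m n w) : fval m n w (m + n) = 0 := by
  unfold fval
  rw [isWord_iff.mp hw]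
  push_cast
  ring

lemma ups_rot_top {w : Fin (m + n) → Bool} {k : ℕ} (hk : k ≤ m + n) :
    ups (m + n) (rotNat (m + n) k w) (m + n) = ups (m + n) w (m + n) := by
  have h1 : ups (m + n) w (k + (m + n - k)) = ups (m + n) w k
      + ups (m + n) (rotNat (m + n) k w) (m + n - k) := ups_rot_low w (by omega)
  have h2 := ups_rot_high (s := k) (w := w) (k := k) hk le_rfl
  rw [Nat.add_sub_cancel' hk] at h1
  have e : m + n - k + k = m + n := by omega
  rw [e] at h2
  omega

lemma isWord_rot {w : Fin (m + n) → Bool} (hw : IsWord m n w) {k : ℕ} (hk : k ≤ m + n) :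
    IsWord m n (rotNat (m + n) k w) := by
  rw [isWord_iff, ups_rot_top hk, ← isWord_iff]
  exact hw

lemma dyck_iff_fval {w : Fin (m + n) → Bool} (hw : IsWord m n w) :
    IsDyck m n w ↔ ∀ t ≤ m + n, 0 ≤ fval m n w t := by
  unfold IsDyck
  simp only [hw, true_and]
  apply forall₂_congr
  intro t ht
  have hur := ups_add_rights w ht
  unfold fval
  rw [sub_nonneg]
  constructor
  · intro hle
    have h1 : m * t ≤ (m + n) * ups (m + n) w t := by
      have hmt : m * t = m * ups (m + n) w t + m * rights (m + n) w t := by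
        rw [← Nat.mul_add, hur]
      calc m * t = m * ups (m + n) w t + m * rights (m + n) w t := hmt
      _ ≤ m * ups (m + n) w t + n * ups (m + n) w t := Nat.add_le_add_left hle _
      _ = (m + n) * ups (m + n) w t := by ring
    exact_mod_cast h1
  · intro hle
    have h1 : m * t ≤ (m + n) * ups (m + n) w t := by exact_mod_cast hle
    have h2 : m * ups (m + n) w t + m * rights (m + n) w t
        ≤ m * ups (m + n) w t + n * ups (m + n) w t := by
      have hmt : m * ups (m + n) w t + m * rights (m + n) w t = m * t := by
        rw [← Nat.mul_add, hur]
      calc m * ups (m + n) w t + m * rights (m + n) w t = m * t := hmt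
      _ ≤ (m + n) * ups (m + n) w t := h1
      _ = m * ups (m + n) w t + n * ups (m + n) w t := by ring
    exact Nat.le_of_add_le_add_left h2

lemma fval_rot_low (w : Fin (m + n) → Bool) {k t : ℕ} (h : k + t ≤ m + n) :
    fval m n (rotNat (m + n) k w) t = fval m n w (k + t) - fval m n w k := by
  have hu := ups_rot_low w h
  unfold fval
  have hc : (ups (m + n) w (k + t) : ℤ)
      = (ups (m + n) w k : ℤ) + (ups (m + n) (rotNat (m + n) k w) t : ℤ) := by exact_mod_cast hu
  rw [hc]
  push_cast
  ring

lemma fval_rot_high {w : Fin (m + n) → Bool} (hw : IsWord m n w) {k s : ℕ}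
    (hk : k ≤ m + n) (hs : s ≤ k) :
    fval m n (rotNat (m + n) k w) (m + n - k + s) = fval m n w s - fval m n w k := by
  have h1 := ups_rot_high (w := w) hk hs
  have h2 : ups (m + n) w (k + (m + n - k)) = ups (m + n) w k
      + ups (m + n) (rotNat (m + n) k w) (m + n - k) := ups_rot_low w (by omega)
  rw [Nat.add_sub_cancel' hk, isWord_iff.mp hw] at h2
  unfold fval
  have hc : (ups (m + n) (rotNat (m + n) k w) (m + n - k + s) : ℤ)
      = (m : ℤ) - (ups (m + n) w k : ℤ) + (ups (m + n) w s : ℤ) := by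
    have hk' : ups (m + n) w k ≤ m := by omega
    push_cast [h1]
    omega
  rw [hc]
  have hcast : ((m + n - k + s : ℕ) : ℤ) = (m : ℤ) + n - k + s := by
    push_cast [Nat.cast_sub hk]
    ring
  rw [hcast]
  push_cast
  ring

lemma dyck_rot_iff {w : Fin (m + n) → Bool} (hw : IsWord m n w) {k : ℕ} (hk : k ≤ m + n) :
    IsDyck m n (rotNat (m + n) k w) ↔ ∀ s ≤ m + n, fval m n w k ≤ fval m n w s := by
  rw [dyck_iff_fval (isWord_rot hw hk)]
  constructor
  · intro hd s hs
    rcases le_or_gt k s with hks | hks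
    · have h2 := hd (s - k) (by omega)
      rw [fval_rot_low w (by omega), Nat.add_sub_cancel' hks] at h2
      linarith
    · have h2 := hd (m + n - k + s) (by omega)
      rw [fval_rot_high hw hk hks.le] at h2
      linarith
  · intro hmin t ht
    rcases le_or_gt t (m + n - k) with h | h
    · rw [fval_rot_low w (by omega)]
      have := hmin (k + t) (by omega)
      linarith
    · have hs : t - (m + n - k) ≤ k := by omega
      have e : t = m + n - k + (t - (m + n - k)) := by omega
      rw [e, fval_rot_high hw hk hs]
      have := hmin (t - (m + n - k)) (by omega)
      linarith

lemma fval_inj (h : Nat.Coprime m n) {w : Fin (m + n) → Bool} (hw : IsWord m n w)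
    {s t : ℕ} (hs : s < m + n) (ht : t < m + n) (he : fval m n w s = fval m n w t) : s = t := by
  have hco : Nat.Coprime m (m + n) := by
    simpa using (Nat.coprime_add_self_right (m := m) (n := n)).mpr h
  have hcoZ : IsCoprime ((m + n : ℕ) : ℤ) (m : ℤ) :=
    (Int.isCoprime_iff_gcd_eq_one.mpr (by exact_mod_cast hco.symm))
  unfold fval at he
  have hdvd : ((m + n : ℕ) : ℤ) ∣ (m : ℤ) * ((s : ℤ) - t) := by
    refine ⟨(ups (m + n) w s : ℤ) - (ups (m + n) w t : ℤ), by linarith⟩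
  have hdvd2 : ((m + n : ℕ) : ℤ) ∣ ((s : ℤ) - t) := hcoZ.dvd_of_dvd_mul_left hdvd
  by_contra hne
  have habs : ((m + n : ℕ) : ℤ) ≤ |(s : ℤ) - t| :=
    Int.le_of_dvd (abs_pos.mpr (sub_ne_zero.mpr (fun hc => hne (by exact_mod_cast hc))))
      ((dvd_abs _ _).mpr hdvd2)
  have h1 : |(s : ℤ) - t| < ((m + n : ℕ) : ℤ) := by
    rw [abs_sub_lt_iff]
    constructor <;> push_cast <;> omega
  omega

end RC
namespace RC

variable {m n : ℕ}

lemma rot_injective {N : ℕ} (hN : 0 < N) (k : ℕ) : Function.Injective (rotNat N k) := by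
  intro w w' hww
  have h1 : ∀ v : Fin N → Bool, rotNat N (N - k % N) (rotNat N k v) = v := by
    intro v
    rw [← rot_mod k v, rot_rot, Nat.add_sub_cancel' (Nat.mod_lt k hN).le, rot_self]
  rw [← h1 w, ← h1 w', hww]

lemma mod_eq_zero_bound {a N : ℕ} (hN : 0 < N) (h1 : 0 < a) (h2 : a < 2 * N)
    (h : a % N = 0) : a = N := by
  obtain ⟨c, hc⟩ := Nat.dvd_of_mod_eq_zero h
  match c with
  | 0 => omega
  | 1 => omega
  | (c + 2) =>
    have : N * (c + 2) = N * c + 2 * N := by ring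
    omega

lemma exists_dyck_rot (hw : IsWord m n w) (hN : 0 < m + n) :
    ∃ k < m + n, IsDyck m n (rotNat (m + n) k w) := by
  obtain ⟨k, hkmem, hmin⟩ := Finset.exists_min_image (Finset.range (m + n)) (fval m n w)
    ⟨0, Finset.mem_range.mpr hN⟩
  have hk : k < m + n := Finset.mem_range.mp hkmem
  refine ⟨k, hk, (dyck_rot_iff hw hk.le).mpr ?_⟩
  intro s hs
  rcases lt_or_eq_of_le hs with h | h
  · exact hmin s (Finset.mem_range.mpr h)
  · rw [h, fval_top hw]
    have := hmin 0 (Finset.mem_range.mpr hN)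
    rw [fval_zero] at this
    linarith

lemma dyck_rot_unique (h : Nat.Coprime m n) {w : Fin (m + n) → Bool} (hw : IsWord m n w)
    {k k' : ℕ} (hk : k < m + n) (hk' : k' < m + n)
    (hd : IsDyck m n (rotNat (m + n) k w)) (hd' : IsDyck m n (rotNat (m + n) k' w)) :
    k = k' := by
  rw [dyck_rot_iff hw hk.le] at hd
  rw [dyck_rot_iff hw hk'.le] at hd'
  exact fval_inj h hw hk hk' (le_antisymm (hd k' hk'.le) (hd' k hk.le))

end RC
namespace RC

variable {m n : ℕ}

lemma card_words :
    (Finset.univ.filter (IsWord m n) : Finset (Fin (m + n) → Bool)).card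
      = Nat.choose (m + n) n := by
  have h1 : (Finset.univ.filter (IsWord m n) : Finset (Fin (m + n) → Bool)).card
      = (Finset.powersetCard m (Finset.univ : Finset (Fin (m + n)))).card := by
    apply Finset.card_bij' (fun w _ => Finset.univ.filter (fun i => w i = true))
      (fun s _ => (fun i => decide (i ∈ s)))
    case hi =>
      intro w hw
      simp only [Finset.mem_filter, Finset.mem_univ, true_and] at hw
      rw [Finset.mem_powersetCard]
      exact ⟨Finset.filter_subset _ _, hw⟩
    case hj =>
      intro s hs
      simp only [Finset.mem_filter, Finset.mem_univ, true_and]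
      rw [Finset.mem_powersetCard] at hs
      unfold IsWord
      have e : (Finset.univ.filter (fun i => (fun i => decide (i ∈ s)) i = true)) = s := by
        ext i; simp
      rw [e]
      exact hs.2
    case left_inv =>
      intro w hw
      funext i
      simp
    case right_inv =>
      intro s hs
      ext i
      simp
  rw [h1, Finset.card_powersetCard, Finset.card_univ, Fintype.card_fin]
  have : m + n - n = m := by omega
  rw [← Nat.choose_symm (Nat.le_add_left n m), this]

lemma main_count (hm : 0 < m) (hn : 0 < n) (h : Nat.Coprime m n) :
    (m + n) * (Finset.univ.filter (IsDyck m n) : Finset (Fin (m + n) → Bool)).card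
      = Nat.choose (m + n) n := by
  classical
  have hN : 0 < m + n := by omega
  set D := (Finset.univ.filter (IsDyck m n) : Finset (Fin (m + n) → Bool)) with hD
  set W := (Finset.univ.filter (IsWord m n) : Finset (Fin (m + n) → Bool)) with hW
  have claim : W = ((Finset.range (m + n)) ×ˢ D).image
      (fun p => rotNat (m + n) p.1 p.2) := by
    apply Finset.Subset.antisymm
    · intro w hw
      rw [hW, Finset.mem_filter] at hw
      obtain ⟨k, hk, hdk⟩ := exists_dyck_rot hw.2 hN
      rw [Finset.mem_image]
      refine ⟨((m + n - k) % (m + n), rotNat (m + n) k w), ?_, ?_⟩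
      · rw [Finset.mem_product]
        exact ⟨Finset.mem_range.mpr (Nat.mod_lt _ hN), by
          rw [hD, Finset.mem_filter]; exact ⟨Finset.mem_univ _, hdk⟩⟩
      · show rotNat (m + n) ((m + n - k) % (m + n)) (rotNat (m + n) k w) = w
        rw [rot_mod, rot_rot, Nat.add_sub_cancel' hk.le, rot_self]
    · intro w hw
      rw [Finset.mem_image] at hw
      obtain ⟨⟨k, d⟩, hmem, heq⟩ := hw
      rw [Finset.mem_product, Finset.mem_range, hD, Finset.mem_filter] at hmem
      rw [hW, Finset.mem_filter]
      refine ⟨Finset.mem_univ _, ?_⟩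
      rw [← heq]
      exact isWord_rot hmem.2.2.1 hmem.1.le
  have hinj : Set.InjOn (fun p : ℕ × (Fin (m + n) → Bool) => rotNat (m + n) p.1 p.2)
      (↑((Finset.range (m + n)) ×ˢ D) : Set (ℕ × (Fin (m + n) → Bool))) := by
    rintro ⟨k, d⟩ hkd ⟨k', d'⟩ hkd' heq
    rw [Finset.mem_coe, Finset.mem_product, Finset.mem_range, hD, Finset.mem_filter]
      at hkd hkd'
    have hk : k < m + n := hkd.1
    have hk' : k' < m + n := hkd'.1
    have hdyck : IsDyck m n d := hkd.2.2
    have hdyck' : IsDyck m n d' := hkd'.2.2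
    simp only at heq
    have hd'eq : d' = rotNat (m + n) ((k + (m + n - k')) % (m + n)) d := by
      rw [rot_mod, ← rot_rot, heq, rot_rot, Nat.add_sub_cancel' hk'.le, rot_self]
    have hzero : (k + (m + n - k')) % (m + n) < m + n := Nat.mod_lt _ hN
    have he0 : (k + (m + n - k')) % (m + n) = 0 := by
      have hrot0 : IsDyck m n (rotNat (m + n) 0 d) := by rw [rot_zero]; exact hdyck
      have hrote : IsDyck m n (rotNat (m + n) ((k + (m + n - k')) % (m + n)) d) := by
        rw [← hd'eq]; exact hdyck'
      exact dyck_rot_unique h hdyck.1 hzero hN hrote hrot0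
    have hkk' : k = k' := by
      have hd1 : (k + (m + n - k')) % (m + n) = 0 := he0
      rcases Nat.eq_zero_or_pos (k + (m + n - k')) with h0 | hpos
      · omega
      · have := mod_eq_zero_bound hN hpos (by omega) hd1
        omega
    subst hkk'
    have hdd : d = d' := rot_injective hN k heq
    rw [hdd]
  have hcard : W.card = (m + n) * D.card := by
    rw [claim, Finset.card_image_of_injOn hinj, Finset.card_product, Finset.card_range]
  rw [← hcard, hW, card_words]

end RC

/-- For coprime positive integers `m`, `n`, the number of `(m,n)`-Dyck words equals
`(1/(m+n)) * C(m+n, n)`. -/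
theorem rational_catalan_count (m n : ℕ) (hm : 0 < m) (hn : 0 < n)
    (h : Nat.Coprime m n) :
    ((Finset.univ.filter (IsDyck m n)).card : ℚ)
      = (1 / (m + n : ℚ)) * Nat.choose (m + n) n := by
  have key := RC.main_count hm hn h
  have hN : ((m : ℚ) + n) ≠ 0 := by positivity
  have key2 : ((m + n : ℕ) : ℚ) * ((Finset.univ.filter (IsDyck m n)).card : ℚ)
      = ((Nat.choose (m + n) n : ℕ) : ℚ) := by exact_mod_cast congrArg (Nat.cast : ℕ → ℚ) key
  push_cast at key2 ⊢
  field_simp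
  linarith
end

section
/- Let m, n be positive integers and let p be an (m,n)-Dyck path. Any cyclic rotation of the word of p that is again an (m,n)-Dyck word must begin at an anchor point of p; that is, if rotating p by k steps yields a Dyck word, then the vertex of p after its first k steps lies on the diagonal m·x = n·y. -/
/-- Generic count of letters equal to `b` in a prefix. -/
def cnt (N : ℕ) (w : Fin N → Bool) (b : Bool) (t : ℕ) : ℕ :=
  (Finset.univ.filter (fun i : Fin N => i.val < t ∧ w i = b)).card

lemma ups_eq_cnt (N : ℕ) (w : Fin N → Bool) (t : ℕ) : ups N w t = cnt N w true t := rfl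
lemma rights_eq_cnt (N : ℕ) (w : Fin N → Bool) (t : ℕ) : rights N w t = cnt N w false t := rfl

lemma cnt_split (N k : ℕ) (hk : k ≤ N) (w : Fin N → Bool) (b : Bool) :
    cnt N w b N = cnt N w b k +
      (Finset.univ.filter (fun i : Fin N => k ≤ i.val ∧ w i = b)).card := by
  unfold cnt
  rw [← Finset.card_filter_add_card_filter_not
    (s := Finset.univ.filter (fun i : Fin N => i.val < N ∧ w i = b))
    (p := fun i : Fin N => i.val < k)]
  congr 1
  · rw [Finset.filter_filter]
    congr 1
    apply Finset.filter_congr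
    intro i _
    simp only [i.isLt, true_and, eq_iff_iff]
    tauto
  · rw [Finset.filter_filter]
    congr 1
    apply Finset.filter_congr
    intro i _
    simp only [i.isLt, true_and, eq_iff_iff, Nat.not_lt]
    tauto

lemma cnt_rot (N k : ℕ) (hk : k ≤ N) (w : Fin N → Bool) (b : Bool) :
    cnt N (rotNat N k w) b (N - k) =
      (Finset.univ.filter (fun i : Fin N => k ≤ i.val ∧ w i = b)).card := by
  unfold cnt rotNat
  apply Finset.card_bij
    (fun (i : Fin N) (hi : i ∈ Finset.univ.filter
        (fun i : Fin N => i.val < N - k ∧ w ⟨(i.val + k) % N, Nat.mod_lt _ i.pos⟩ = b)) =>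
      (⟨i.val + k, by
        have h1 := (Finset.mem_filter.mp hi).2.1; omega⟩ : Fin N))
  · intro i hi
    have h := Finset.mem_filter.mp hi
    have h1 : i.val < N - k := h.2.1
    have h2 := h.2.2
    refine Finset.mem_filter.mpr ⟨Finset.mem_univ _, by simp, ?_⟩
    have hmod : (i.val + k) % N = i.val + k := Nat.mod_eq_of_lt (by omega)
    calc w ⟨i.val + k, by omega⟩ = w ⟨(i.val + k) % N, Nat.mod_lt _ i.pos⟩ := by
          congr 1; exact Fin.ext hmod.symm
      _ = b := h2
  · intro i hi j hj hij
    have : i.val + k = j.val + k := congrArg Fin.val hij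
    exact Fin.ext (by omega)
  · intro j hj
    have h := Finset.mem_filter.mp hj
    have hkj : k ≤ j.val := h.2.1
    refine ⟨⟨j.val - k, by omega⟩, Finset.mem_filter.mpr ⟨Finset.mem_univ _, ?_, ?_⟩, ?_⟩
    · simp only; omega
    · have hmod : (j.val - k + k) % N = j.val := by
        rw [Nat.sub_add_cancel hkj]; exact Nat.mod_eq_of_lt j.isLt
      calc w ⟨(j.val - k + k) % N, Nat.mod_lt _ (by omega)⟩ = w j := by
            congr 1; exact Fin.ext hmod
        _ = b := h.2.2
    · exact Fin.ext (by simp only; omega)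

lemma cnt_le (N : ℕ) (w : Fin N → Bool) (b : Bool) (t : ℕ) :
    cnt N w b t ≤ cnt N w b N := by
  apply Finset.card_le_card
  intro i hi
  have h := Finset.mem_filter.mp hi
  exact Finset.mem_filter.mpr ⟨Finset.mem_univ _, i.isLt, h.2.2⟩

/-- Lemma: any cyclic rotation of an `(m,n)`-Dyck path that is again a Dyck word must
begin at an anchor point: if rotating by `k` yields a Dyck word, the vertex after the
first `k` steps lies on the diagonal `m·x = n·y`. -/
theorem dyck_rotation_starts_at_anchor (m n : ℕ) (hm : 0 < m) (hn : 0 < n)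
    (w : Fin (m + n) → Bool) (hw : IsDyck m n w)
    (k : ℕ) (hk : k ≤ m + n) (hrot : IsDyck m n (rotNat (m + n) k w)) :
    m * rights (m + n) w k = n * ups (m + n) w k := by
  have htot_true : cnt (m + n) w true (m + n) = m := by
    have hW := hw.1
    unfold IsWord at hW
    unfold cnt
    have e : Finset.univ.filter (fun i : Fin (m + n) => i.val < m + n ∧ w i = true)
        = Finset.univ.filter (fun i : Fin (m + n) => w i = true) := by
      apply Finset.filter_congr
      intro i _
      simp [i.isLt]
    rw [e, hW]
  have htot_all : cnt (m + n) w true (m + n) + cnt (m + n) w false (m + n) = m + n := by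
    unfold cnt
    have e1 : Finset.univ.filter (fun i : Fin (m + n) => i.val < m + n ∧ w i = true)
        = Finset.univ.filter (fun i : Fin (m + n) => w i = true) := by
      apply Finset.filter_congr; intro i _; simp [i.isLt]
    have e2 : Finset.univ.filter (fun i : Fin (m + n) => i.val < m + n ∧ w i = false)
        = Finset.univ.filter (fun i : Fin (m + n) => ¬ w i = true) := by
      apply Finset.filter_congr; intro i _; simp [i.isLt]
    rw [e1, e2, Finset.card_filter_add_card_filter_not, Finset.card_univ,
      Fintype.card_fin]
  have htot_false : cnt (m + n) w false (m + n) = n := by omega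
  have h1 : m * rights (m + n) w k ≤ n * ups (m + n) w k := hw.2 k hk
  have h2 := hrot.2 (m + n - k) (by omega)
  rw [rights_eq_cnt, ups_eq_cnt, cnt_rot (m + n) k hk w false,
    cnt_rot (m + n) k hk w true] at h2
  have hsf := cnt_split (m + n) k hk w false
  have hst := cnt_split (m + n) k hk w true
  rw [rights_eq_cnt, ups_eq_cnt]
  rw [rights_eq_cnt, ups_eq_cnt] at h1
  set rk := cnt (m + n) w false k with hrkdef
  set uk := cnt (m + n) w true k with hukdef
  have hrk : rk ≤ n := htot_false ▸ cnt_le (m + n) w false k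
  have huk : uk ≤ m := htot_true ▸ cnt_le (m + n) w true k
  have e1 : (Finset.univ.filter (fun i : Fin (m + n) => k ≤ i.val ∧ w i = false)).card
      = n - rk := by omega
  have e2 : (Finset.univ.filter (fun i : Fin (m + n) => k ≤ i.val ∧ w i = true)).card
      = m - uk := by omega
  rw [e1, e2] at h2
  have ea : m * (n - rk) + m * rk = m * n := by rw [← Nat.mul_add, Nat.sub_add_cancel hrk]
  have eb : n * (m - uk) + n * uk = n * m := by rw [← Nat.mul_add, Nat.sub_add_cancel huk]
  have hc : m * n = n * m := Nat.mul_comm m n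
  linarith
end

section
/- Let m, n be positive integers. Then the sum over all (m,n)-Dyck words p of gcd(m,n)/a(p) equals (gcd(m,n)/(m+n)) * C(m+n, n), where a(p) is the number of anchor points of p other than the origin. -/
namespace Anchor

/-- periodic extension of the word -/
def wrap (N : ℕ) (w : Fin N → Bool) (i : ℕ) : Bool :=
  if h : 0 < N then w ⟨i % N, Nat.mod_lt _ h⟩ else false

/-- the (scaled) height function of the path -/
def SS (m n : ℕ) (w : Fin (m + n) → Bool) (t : ℕ) : ℤ :=
  ∑ i ∈ Finset.range t, (if wrap (m + n) w i then (n : ℤ) else -(m : ℤ))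

variable {m n : ℕ}

lemma wrap_fin {N : ℕ} (w : Fin N → Bool) (i : Fin N) : wrap N w i.val = w i := by
  have h : 0 < N := i.pos
  simp only [wrap, dif_pos h]
  congr 1
  exact Fin.ext (Nat.mod_eq_of_lt i.isLt)

lemma wrap_rot {N : ℕ} (hN : 0 < N) (k : ℕ) (w : Fin N → Bool) (i : ℕ) :
    wrap N (rotNat N k w) i = wrap N w (i + k) := by
  simp only [wrap, dif_pos hN, rotNat]
  congr 1
  exact Fin.ext (by simp [Nat.add_mod, Nat.mod_mod_of_dvd])

lemma wrap_period {N : ℕ} (w : Fin N → Bool) (t : ℕ) :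
    wrap N w (t + N) = wrap N w t := by
  simp [wrap, Nat.add_mod_right]

lemma SS_succ (w : Fin (m + n) → Bool) (t : ℕ) :
    SS m n w (t + 1) = SS m n w t + (if wrap (m + n) w t then (n : ℤ) else -(m : ℤ)) := by
  simp [SS, Finset.sum_range_succ]

lemma SS_rot (hN : 0 < m + n) (k : ℕ) (w : Fin (m + n) → Bool) (t : ℕ) :
    SS m n (rotNat (m + n) k w) t = SS m n w (k + t) - SS m n w k := by
  have h : SS m n w (k + t) = SS m n w k +
      ∑ i ∈ Finset.range t, (if wrap (m + n) w (k + i) then (n : ℤ) else -(m : ℤ)) := by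
    simp [SS, Finset.sum_range_add]
  rw [h]
  have h2 : SS m n (rotNat (m + n) k w) t =
      ∑ i ∈ Finset.range t, (if wrap (m + n) w (k + i) then (n : ℤ) else -(m : ℤ)) := by
    unfold SS
    refine Finset.sum_congr rfl fun i _ => ?_
    rw [wrap_rot hN, Nat.add_comm i k]
  rw [h2]; ring

lemma SS_word {w : Fin (m + n) → Bool} (hw : IsWord m n w) : SS m n w (m + n) = 0 := by
  have h1 : SS m n w (m + n) = ∑ i : Fin (m + n), (if w i then (n : ℤ) else -(m : ℤ)) := by
    unfold SS
    rw [← Fin.sum_univ_eq_sum_range]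
    refine Finset.sum_congr rfl fun i _ => ?_
    rw [wrap_fin]
  rw [h1, ← Finset.sum_filter_add_sum_filter_not Finset.univ (fun i => w i = true)]
  have hc : (Finset.univ.filter (fun i => ¬ (w i = true))).card = n := by
    have := Finset.card_filter_add_card_filter_not
      (s := (Finset.univ : Finset (Fin (m+n)))) (p := fun i => w i = true)
    simp only [Finset.card_univ, Fintype.card_fin] at this
    have hw' : (Finset.univ.filter (fun i => w i = true)).card = m := hw
    omega
  have hw' : (Finset.univ.filter (fun i => w i = true)).card = m := hw
  rw [Finset.sum_congr rfl (fun i hi => if_pos (Finset.mem_filter.mp hi).2),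
      Finset.sum_congr rfl (fun i hi => if_neg (Finset.mem_filter.mp hi).2),
      Finset.sum_const, Finset.sum_const, hw', hc]
  ring

lemma SS_shift (w : Fin (m + n) → Bool) (t : ℕ) :
    SS m n w (t + (m + n)) = SS m n w t + SS m n w (m + n) := by
  induction t with
  | zero => simp [SS]
  | succ t ih =>
      have h : t + 1 + (m + n) = (t + (m + n)) + 1 := by omega
      rw [h, SS_succ, ih, SS_succ, wrap_period]
      ring

lemma SS_mod {w : Fin (m + n) → Bool} (hN : 0 < m + n)
    (hw : IsWord m n w) (j : ℕ) : SS m n w j = SS m n w (j % (m + n)) := by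
  induction j using Nat.strong_induction_on with
  | _ j ih =>
    by_cases h : j < m + n
    · rw [Nat.mod_eq_of_lt h]
    · have h2 : j = (j - (m + n)) + (m + n) := by omega
      have h3 : SS m n w j = SS m n w (j - (m + n)) + SS m n w (m + n) := by
        conv_lhs => rw [h2]
        exact SS_shift w _
      rw [h3, SS_word hw, add_zero, ih _ (by omega)]
      congr 1
      rw [← Nat.mod_eq_sub_mod (by omega)]

lemma SS_eq (hN : 0 < m + n) (w : Fin (m + n) → Bool) {t : ℕ} (ht : t ≤ m + n) :
    SS m n w t = (n : ℤ) * ups (m + n) w t - (m : ℤ) * rights (m + n) w t := by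
  have h1 : SS m n w t =
      ∑ i ∈ Finset.univ.filter (fun i : Fin (m + n) => i.val < t),
        (if w i then (n : ℤ) else -(m : ℤ)) := by
    unfold SS
    refine Finset.sum_nbij' (i := fun a => (⟨a % (m + n), Nat.mod_lt _ hN⟩ : Fin (m + n)))
      (j := fun b => b.val) ?_ ?_ ?_ ?_ ?_
    · intro a ha
      simp only [Finset.mem_range] at ha
      simp only [Finset.mem_filter, Finset.mem_univ, true_and]
      simpa [Nat.mod_eq_of_lt (lt_of_lt_of_le ha ht)] using ha
    · intro b hb
      simp only [Finset.mem_filter, Finset.mem_univ, true_and] at hb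
      simpa using hb
    · intro a ha
      simp only [Finset.mem_range] at ha
      simp [Nat.mod_eq_of_lt (lt_of_lt_of_le ha ht)]
    · intro b hb
      exact Fin.ext (Nat.mod_eq_of_lt b.isLt)
    · intro a ha
      simp only [Finset.mem_range] at ha
      have h2 : (⟨a % (m + n), Nat.mod_lt _ hN⟩ : Fin (m + n)).val = a :=
        Nat.mod_eq_of_lt (lt_of_lt_of_le ha ht)
      rw [← wrap_fin w ⟨a % (m + n), Nat.mod_lt _ hN⟩, h2]
  rw [h1, ← Finset.sum_filter_add_sum_filter_not _ (fun i => w i = true)]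
  rw [Finset.sum_congr rfl (fun i hi => if_pos (Finset.mem_filter.mp hi).2),
      Finset.sum_congr rfl (fun i hi => if_neg (Finset.mem_filter.mp hi).2),
      Finset.sum_const, Finset.sum_const]
  have hu : ((Finset.univ.filter (fun i : Fin (m+n) => i.val < t)).filter
      (fun i => w i = true)) = Finset.univ.filter (fun i : Fin (m+n) => i.val < t ∧ w i = true) := by
    rw [Finset.filter_filter]
  have hr : ((Finset.univ.filter (fun i : Fin (m+n) => i.val < t)).filter
      (fun i => ¬ (w i = true))) = Finset.univ.filter (fun i : Fin (m+n) => i.val < t ∧ w i = false) := by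
    rw [Finset.filter_filter]
    simp [Bool.not_eq_true]
  rw [hu, hr]
  unfold ups rights
  ring

def sigma' (N k : ℕ) (i : Fin N) : Fin N := ⟨(i.val + k) % N, Nat.mod_lt _ i.pos⟩

lemma sigma_inj (N k : ℕ) : Function.Injective (sigma' N k) := by
  intro i j h
  simp only [sigma', Fin.mk.injEq] at h
  have h3 : i.val % N = j.val % N := Nat.ModEq.add_right_cancel' k h
  exact Fin.ext (by rwa [Nat.mod_eq_of_lt i.isLt, Nat.mod_eq_of_lt j.isLt] at h3)

lemma sigma_bij (N k : ℕ) : Function.Bijective (sigma' N k) :=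
  (Finite.injective_iff_bijective).mp (sigma_inj N k)

lemma rot_injective (N k : ℕ) : Function.Injective (rotNat N k) := by
  intro w w' h
  funext i
  obtain ⟨j, hj⟩ := (sigma_bij N k).2 i
  have h2 := congrFun h j
  simp only [rotNat] at h2
  rw [← hj]
  exact h2

lemma rot_bijective (N k : ℕ) : Function.Bijective (rotNat N k) :=
  (Finite.injective_iff_bijective).mp (rot_injective N k)

lemma card_rot {N : ℕ} (k : ℕ) (w : Fin N → Bool) :
    (Finset.univ.filter (fun i => rotNat N k w i = true)).card
      = (Finset.univ.filter (fun i => w i = true)).card := by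
  apply Finset.card_bij (fun a _ => sigma' N k a)
  · intro a ha
    simp only [Finset.mem_filter, Finset.mem_univ, true_and] at ha ⊢
    exact ha
  · intro a _ b _ hab
    exact sigma_inj N k hab
  · intro b hb
    simp only [Finset.mem_filter, Finset.mem_univ, true_and] at hb
    obtain ⟨a, ha⟩ := (sigma_bij N k).2 b
    refine ⟨a, ?_, ha⟩
    simp only [Finset.mem_filter, Finset.mem_univ, true_and, rotNat]
    exact Finset.mem_filter.mpr ⟨Finset.mem_univ _, by show w (sigma' N k a) = true; rw [ha]; exact hb⟩

lemma isWord_rot (k : ℕ) (w : Fin (m + n) → Bool) :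
    IsWord m n (rotNat (m + n) k w) ↔ IsWord m n w := by
  unfold IsWord
  rw [card_rot]

lemma dyck_iff (hN : 0 < m + n) (w : Fin (m + n) → Bool) :
    IsDyck m n w ↔ IsWord m n w ∧ ∀ t ≤ m + n, 0 ≤ SS m n w t := by
  unfold IsDyck
  refine and_congr_right fun _ => ?_
  constructor
  · intro h t ht
    rw [SS_eq hN w ht]
    have := h t ht
    omega
  · intro h t ht
    have := h t ht
    rw [SS_eq hN w ht] at this
    omega

lemma dyck_rot_iff (hN : 0 < m + n) {w : Fin (m + n) → Bool} (hw : IsWord m n w)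
    {k : ℕ} (hk : k < m + n) :
    IsDyck m n (rotNat (m + n) k w) ↔ ∀ j < m + n, SS m n w k ≤ SS m n w j := by
  rw [dyck_iff hN]
  constructor
  · rintro ⟨-, h⟩ j hj
    by_cases hkj : k ≤ j
    · have h2 := h (j - k) (by omega)
      rw [SS_rot hN] at h2
      have h3 : k + (j - k) = j := by omega
      rw [h3] at h2
      linarith
    · have h2 := h (j + (m + n) - k) (by omega)
      rw [SS_rot hN] at h2
      have h3 : k + (j + (m + n) - k) = j + (m + n) := by omega
      rw [h3, SS_shift, SS_word hw] at h2
      linarith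
  · intro h
    refine ⟨(isWord_rot k w).mpr hw, fun t ht => ?_⟩
    rw [SS_rot hN]
    have h2 : SS m n w (k + t) = SS m n w ((k + t) % (m + n)) := SS_mod hN hw _
    have h3 := h ((k + t) % (m + n)) (Nat.mod_lt _ hN)
    linarith

lemma anchors_eq (hN : 0 < m + n) (w : Fin (m + n) → Bool) :
    anchors m n w = (Finset.Icc 1 (m + n)).filter (fun t => SS m n w t = 0) := by
  unfold anchors
  refine Finset.filter_congr fun t ht => ?_
  rw [Finset.mem_Icc] at ht
  rw [SS_eq hN w ht.2]
  omega

lemma anchors_card_rot (hN : 0 < m + n) {w : Fin (m + n) → Bool} (hw : IsWord m n w)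
    {k : ℕ} (hk : k < m + n) :
    (anchors m n (rotNat (m + n) k w)).card
      = ((Finset.range (m + n)).filter (fun j => SS m n w j = SS m n w k)).card := by
  rw [anchors_eq hN]
  apply Finset.card_nbij' (i := fun t => (k + t) % (m + n))
    (j := fun j => if k < j then j - k else j + (m + n) - k)
  · intro t ht
    simp only [Finset.mem_coe, Finset.mem_filter, Finset.mem_Icc] at ht
    obtain ⟨⟨ht1, ht2⟩, ht3⟩ := ht
    rw [SS_rot hN] at ht3
    simp only [Finset.mem_coe, Finset.mem_filter, Finset.mem_range]
    refine ⟨Nat.mod_lt _ hN, ?_⟩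
    rw [← SS_mod hN hw]
    linarith
  · intro j hj
    simp only [Finset.mem_coe, Finset.mem_filter, Finset.mem_range] at hj
    obtain ⟨hj1, hj2⟩ := hj
    simp only [Finset.mem_coe, Finset.mem_filter, Finset.mem_Icc]
    by_cases hkj : k < j
    · rw [if_pos hkj]
      refine ⟨⟨by omega, by omega⟩, ?_⟩
      rw [SS_rot hN]
      have h3 : k + (j - k) = j := by omega
      rw [h3, hj2]; ring
    · rw [if_neg hkj]
      refine ⟨⟨by omega, by omega⟩, ?_⟩
      rw [SS_rot hN]
      have h3 : k + (j + (m + n) - k) = j + (m + n) := by omega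
      rw [h3, SS_shift, SS_word hw, hj2]; ring
  · intro t ht
    simp only [Finset.mem_coe, Finset.mem_filter, Finset.mem_Icc] at ht
    obtain ⟨⟨ht1, ht2⟩, -⟩ := ht
    beta_reduce
    by_cases h : k + t < m + n
    · rw [Nat.mod_eq_of_lt h, if_pos (by omega)]
      omega
    · have h2 : (k + t) % (m + n) = k + t - (m + n) := by
        rw [Nat.mod_eq_sub_mod (by omega), Nat.mod_eq_of_lt (by omega)]
      rw [h2, if_neg (by omega)]
      omega
  · intro j hj
    simp only [Finset.mem_coe, Finset.mem_filter, Finset.mem_range] at hj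
    obtain ⟨hj1, -⟩ := hj
    beta_reduce
    by_cases hkj : k < j
    · rw [if_pos hkj]
      have h3 : k + (j - k) = j := by omega
      rw [h3, Nat.mod_eq_of_lt hj1]
    · rw [if_neg hkj]
      have h3 : k + (j + (m + n) - k) = j + (m + n) := by omega
      rw [h3, Nat.add_mod_right, Nat.mod_eq_of_lt hj1]

open Finset

variable {m n : ℕ}

lemma min_filter_eq {w : Fin (m + n) → Bool} {k : ℕ}
    (hk : k < m + n) (hmin : ∀ j < m + n, SS m n w k ≤ SS m n w j) :
    (Finset.range (m + n)).filter (fun j => SS m n w j = SS m n w k)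
      = (Finset.range (m + n)).filter (fun j => ∀ i < m + n, SS m n w j ≤ SS m n w i) := by
  ext j
  simp only [Finset.mem_filter, Finset.mem_range]
  constructor
  · rintro ⟨hj, he⟩
    exact ⟨hj, fun i hi => he ▸ hmin i hi⟩
  · rintro ⟨hj, hm2⟩
    exact ⟨hj, le_antisymm (hm2 k hk) (hmin j hj)⟩

lemma inner_sum (hN : 0 < m + n) (w : Fin (m + n) → Bool) :
    ∑ k ∈ Finset.range (m + n),
        (if IsDyck m n (rotNat (m + n) k w)
          then ((anchors m n (rotNat (m + n) k w)).card : ℚ)⁻¹ else 0)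
      = if IsWord m n w then 1 else 0 := by
  by_cases hw : IsWord m n w
  · rw [if_pos hw]
    set G := (Finset.range (m + n)).filter
      (fun j => ∀ i < m + n, SS m n w j ≤ SS m n w i) with hG
    have hGne : G.Nonempty := by
      obtain ⟨k, hk, hmin⟩ := Finset.exists_min_image (Finset.range (m + n)) (SS m n w)
        ⟨0, Finset.mem_range.mpr hN⟩
      exact ⟨k, Finset.mem_filter.mpr ⟨hk, fun i hi => hmin i (Finset.mem_range.mpr hi)⟩⟩
    have key : ∀ k ∈ Finset.range (m + n),
        (if IsDyck m n (rotNat (m + n) k w)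
          then ((anchors m n (rotNat (m + n) k w)).card : ℚ)⁻¹ else 0)
        = if k ∈ G then (G.card : ℚ)⁻¹ else 0 := by
      intro k hk
      rw [Finset.mem_range] at hk
      have hGmem : k ∈ G ↔ ∀ i < m + n, SS m n w k ≤ SS m n w i := by
        simp [hG, Finset.mem_filter, Finset.mem_range, hk]
      by_cases hkG : k ∈ G
      · have hmin := hGmem.mp hkG
        rw [if_pos ((dyck_rot_iff hN hw hk).mpr hmin), if_pos hkG,
            anchors_card_rot hN hw hk, min_filter_eq hk hmin]
      · rw [if_neg (fun hd => hkG (hGmem.mpr ((dyck_rot_iff hN hw hk).mp hd))), if_neg hkG]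
    rw [Finset.sum_congr rfl key, Finset.sum_ite_mem, Finset.inter_eq_right.mpr
      (Finset.filter_subset _ _), Finset.sum_const, nsmul_eq_mul]
    exact mul_inv_cancel₀ (by exact_mod_cast Finset.card_ne_zero.mpr hGne)
  · rw [if_neg hw]
    refine Finset.sum_eq_zero fun k _ => ?_
    rw [if_neg (fun hd => hw ((isWord_rot k w).mp hd.1))]

lemma card_words (m n : ℕ) :
    ((Finset.univ : Finset (Fin (m + n) → Bool)).filter (IsWord m n)).card
      = (m + n).choose n := by
  have h1 : ((Finset.univ : Finset (Fin (m + n) → Bool)).filter (IsWord m n)).card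
      = ((Finset.univ : Finset (Fin (m + n))).powersetCard m).card := by
    apply Finset.card_bij (fun w _ => Finset.univ.filter (fun i => w i = true))
    · intro w hw
      rw [Finset.mem_filter] at hw
      rw [Finset.mem_powersetCard]
      exact ⟨Finset.filter_subset _ _, hw.2⟩
    · intro w _ w' _ h
      funext i
      have := Finset.ext_iff.mp h i
      simp only [Finset.mem_filter, Finset.mem_univ, true_and] at this
      cases hwi : w i <;> cases hwi' : w' i <;> simp_all
    · intro s hs
      rw [Finset.mem_powersetCard] at hs
      refine ⟨fun i => decide (i ∈ s), ?_, ?_⟩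
      · rw [Finset.mem_filter]
        refine ⟨Finset.mem_univ _, ?_⟩
        show (Finset.univ.filter (fun i => decide (i ∈ s) = true)).card = m
        have hfs : (Finset.univ.filter (fun i => decide (i ∈ s) = true)) = s := by
          ext i; simp
        rw [hfs, hs.2]
      · ext i
        simp
  rw [h1, Finset.card_powersetCard, Finset.card_univ, Fintype.card_fin]
  have h2 := Nat.choose_symm (Nat.le_add_left n m)
  have h3 : m + n - n = m := by omega
  rw [h3] at h2
  exact h2

end Anchor

/-- Theorem 1: the sum over all `(m,n)`-Dyck words `p` of `gcd(m,n)/a(p)` equals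
`(gcd(m,n)/(m+n)) * C(m+n, n)`, where `a(p)` counts the anchors of `p` other than
the origin. -/
theorem anchored_weight_sum (m n : ℕ) (hm : 0 < m) (hn : 0 < n) :
    ∑ w ∈ Finset.univ.filter (IsDyck m n),
        ((Nat.gcd m n : ℚ) / (anchors m n w).card)
      = (Nat.gcd m n : ℚ) / (m + n) * Nat.choose (m + n) n := by
  have hN : 0 < m + n := by omega
  set F : (Fin (m + n) → Bool) → ℚ :=
    fun v => if IsDyck m n v then ((anchors m n v).card : ℚ)⁻¹ else 0 with hF
  have swap : ∑ w : Fin (m + n) → Bool, ∑ k ∈ Finset.range (m + n), F (rotNat (m + n) k w)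
      = (m + n) * ∑ v : Fin (m + n) → Bool, F v := by
    rw [Finset.sum_comm]
    have : ∀ k ∈ Finset.range (m + n),
        ∑ w : Fin (m + n) → Bool, F (rotNat (m + n) k w) = ∑ v : Fin (m + n) → Bool, F v :=
      fun k _ => Function.Bijective.sum_comp (Anchor.rot_bijective (m + n) k) F
    rw [Finset.sum_congr rfl this, Finset.sum_const, Finset.card_range, nsmul_eq_mul]
    push_cast
    ring
  have inner : ∑ w : Fin (m + n) → Bool, ∑ k ∈ Finset.range (m + n), F (rotNat (m + n) k w)
      = ((m + n).choose n : ℚ) := by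
    have h1 : ∀ w : Fin (m + n) → Bool,
        ∑ k ∈ Finset.range (m + n), F (rotNat (m + n) k w)
          = if IsWord m n w then (1 : ℚ) else 0 := fun w => Anchor.inner_sum hN w
    rw [Finset.sum_congr rfl fun w _ => h1 w, Finset.sum_boole, Anchor.card_words]
  have key : ∑ v : Fin (m + n) → Bool, F v = ((m + n).choose n : ℚ) / (m + n) := by
    rw [eq_div_iff (by positivity), mul_comm, ← swap, inner]
  have lhs : ∑ w ∈ Finset.univ.filter (IsDyck m n),
      ((Nat.gcd m n : ℚ) / (anchors m n w).card)
      = (Nat.gcd m n : ℚ) * ∑ v : Fin (m + n) → Bool, F v := by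
    rw [hF, ← Finset.sum_filter, Finset.mul_sum]
    exact Finset.sum_congr rfl fun w _ => by rw [div_eq_mul_inv]
  rw [lhs, key]
  ring
end

section
/- Let m, n be positive integers. The number of binary words of type (m,n) that are (m,n)-Dyck words, summed with multiplicity (m+n)/a(p) over Dyck words p, equals C(m+n,n); equivalently, the sum over all (m,n)-Dyck words p of (m+n)/a(p) equals the binomial coefficient C(m+n, n). -/
namespace DyckAux

/-- helper for mod computations with variable modulus -/
lemma mod_helper {N a j : ℕ} (c : ℕ) (h : a = j + N * c) (hj : j < N) : a % N = j := by
  subst h; rw [Nat.add_mul_mod_self_left, Nat.mod_eq_of_lt hj]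

variable (m n : ℕ)

/-- periodic extension of the word -/
def Wd (w : Fin (m + n) → Bool) (t : ℕ) : Bool :=
  if h : t % (m + n) < m + n then w ⟨t % (m + n), h⟩ else false

/-- height function -/
def F (w : Fin (m + n) → Bool) : ℕ → ℤ
  | 0 => 0
  | t + 1 => F w t + (if Wd m n w t then (n : ℤ) else -(m : ℤ))

variable {m n}

lemma Wd_lt (w : Fin (m + n) → Bool) {t : ℕ} (h : t < m + n) :
    Wd m n w t = w ⟨t, h⟩ := by
  unfold Wd
  rw [dif_pos (by rw [Nat.mod_eq_of_lt h]; exact h)]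
  congr 1
  exact Fin.ext (Nat.mod_eq_of_lt h)

lemma Wd_period (w : Fin (m + n) → Bool) (t : ℕ) :
    Wd m n w (t + (m + n)) = Wd m n w t := by
  unfold Wd; rw [Nat.add_mod_right]

lemma count_succ (P : Fin (m + n) → Prop) [DecidablePred P] {t : ℕ} (h : t < m + n) :
    (Finset.univ.filter fun i : Fin (m + n) => i.val < t + 1 ∧ P i).card
      = (Finset.univ.filter fun i : Fin (m + n) => i.val < t ∧ P i).card
        + (if P ⟨t, h⟩ then 1 else 0) := by
  have hsplit : (Finset.univ.filter fun i : Fin (m + n) => i.val < t + 1 ∧ P i)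
      = (Finset.univ.filter fun i : Fin (m + n) => i.val < t ∧ P i)
        ∪ (Finset.univ.filter fun i : Fin (m + n) => i = ⟨t, h⟩ ∧ P i) := by
    ext i
    simp only [Finset.mem_filter, Finset.mem_union, Finset.mem_univ, true_and]
    constructor
    · rintro ⟨hi, hp⟩
      rcases Nat.lt_succ_iff_lt_or_eq.mp hi with h' | h'
      · exact Or.inl ⟨h', hp⟩
      · exact Or.inr ⟨Fin.ext h', hp⟩
    · rintro (⟨hi, hp⟩ | ⟨hi, hp⟩)
      · exact ⟨Nat.lt_succ_of_lt hi, hp⟩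
      · exact ⟨by rw [hi]; exact Nat.lt_succ_self t, hp⟩
  rw [hsplit, Finset.card_union_of_disjoint]
  · congr 1
    by_cases hp : P ⟨t, h⟩
    · rw [if_pos hp]
      rw [show (Finset.univ.filter fun i : Fin (m + n) => i = ⟨t, h⟩ ∧ P i) = {⟨t, h⟩} by
        ext i; simp only [Finset.mem_filter, Finset.mem_univ, true_and, Finset.mem_singleton]
        constructor
        · rintro ⟨hi, _⟩; exact hi
        · rintro rfl; exact ⟨rfl, hp⟩]
      simp
    · rw [if_neg hp, Finset.card_eq_zero, Finset.filter_eq_empty_iff]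
      rintro i - ⟨rfl, hPi⟩
      exact hp hPi
  · rw [Finset.disjoint_left]
    rintro i hi1 hi2
    simp only [Finset.mem_filter, Finset.mem_univ, true_and] at hi1 hi2
    rcases hi1 with ⟨hlt, -⟩
    rcases hi2 with ⟨rfl, -⟩
    exact absurd hlt (lt_irrefl t)

lemma ups_succ (w : Fin (m + n) → Bool) {t : ℕ} (h : t < m + n) :
    ups (m + n) w (t + 1) = ups (m + n) w t + (if w ⟨t, h⟩ = true then 1 else 0) :=
  count_succ (fun i => w i = true) h

lemma rights_succ (w : Fin (m + n) → Bool) {t : ℕ} (h : t < m + n) :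
    rights (m + n) w (t + 1) = rights (m + n) w t + (if w ⟨t, h⟩ = false then 1 else 0) :=
  count_succ (fun i => w i = false) h

lemma ups_zero (w : Fin (m + n) → Bool) : ups (m + n) w 0 = 0 := by
  simp [ups]

lemma rights_zero (w : Fin (m + n) → Bool) : rights (m + n) w 0 = 0 := by
  simp [rights]

lemma F_eq (w : Fin (m + n) → Bool) : ∀ t, t ≤ m + n →
    F m n w t = (n : ℤ) * ups (m + n) w t - (m : ℤ) * rights (m + n) w t
  | 0, _ => by simp [F, ups_zero, rights_zero]
  | t + 1, ht => by
    have hlt : t < m + n := ht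
    rw [show F m n w (t+1) = F m n w t + (if Wd m n w t then (n : ℤ) else -(m : ℤ)) from rfl]
    rw [F_eq w t (le_of_lt hlt), Wd_lt w hlt, ups_succ w hlt, rights_succ w hlt]
    cases hw : w ⟨t, hlt⟩ <;> simp [hw] <;> push_cast <;> ring
lemma ups_total (w : Fin (m + n) → Bool) (hw : IsWord m n w) :
    ups (m + n) w (m + n) = m := by
  unfold ups
  rw [show (Finset.univ.filter fun i : Fin (m+n) => i.val < m + n ∧ w i = true)
      = Finset.univ.filter (fun i : Fin (m+n) => w i = true) from
    Finset.filter_congr (fun i _ => by simp [i.isLt])]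
  exact hw

lemma rights_total (w : Fin (m + n) → Bool) (hw : IsWord m n w) :
    rights (m + n) w (m + n) = n := by
  have h1 : (Finset.univ.filter fun i : Fin (m + n) => w i = true).card
      + (Finset.univ.filter fun i : Fin (m + n) => ¬(w i = true)).card
      = (Finset.univ : Finset (Fin (m + n))).card :=
    Finset.card_filter_add_card_filter_not _
  have h2 : rights (m + n) w (m + n)
      = (Finset.univ.filter fun i : Fin (m + n) => ¬(w i = true)).card := by
    unfold rights; congr 1
    apply Finset.filter_congr
    intro i _
    simp [i.isLt]
  rw [h2]
  rw [IsWord] at hw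
  simp only [Finset.card_univ, Fintype.card_fin] at h1
  omega

lemma F_total (w : Fin (m + n) → Bool) (hw : IsWord m n w) : F m n w (m + n) = 0 := by
  rw [F_eq w (m + n) le_rfl, ups_total w hw, rights_total w hw]; ring

lemma F_period (w : Fin (m + n) → Bool) (hw : IsWord m n w) :
    ∀ t, F m n w (t + (m + n)) = F m n w t
  | 0 => by rw [Nat.zero_add]; exact F_total w hw
  | t + 1 => by
    have : t + 1 + (m + n) = (t + (m + n)) + 1 := by omega
    rw [this]
    rw [show F m n w ((t + (m+n)) + 1)
        = F m n w (t + (m+n)) + (if Wd m n w (t + (m+n)) then (n : ℤ) else -(m : ℤ)) from rfl]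
    rw [F_period w hw t, Wd_period]
    rfl

lemma F_mod (w : Fin (m + n) → Bool) (hw : IsWord m n w) (t : ℕ) :
    F m n w t = F m n w (t % (m + n)) := by
  by_cases hN : 0 < m + n
  · induction t using Nat.strong_induction_on with
    | _ t ih =>
      rcases lt_or_ge t (m + n) with h | h
      · rw [Nat.mod_eq_of_lt h]
      · have h1 : t = (t - (m + n)) + (m + n) := by omega
        rw [h1, F_period w hw, Nat.add_mod_right]
        exact ih _ (by omega)
  · have h0 : m + n = 0 := by omega
    rw [h0, Nat.mod_zero]

lemma F_congr_mod (w : Fin (m + n) → Bool) (hw : IsWord m n w) {a b : ℕ}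
    (h : a % (m + n) = b % (m + n)) : F m n w a = F m n w b := by
  rw [F_mod w hw a, F_mod w hw b, h]

lemma Wd_rot (hN : 0 < m + n) (w : Fin (m + n) → Bool) (k t : ℕ) :
    Wd m n (rotNat (m + n) k w) t = Wd m n w (t + k) := by
  unfold Wd rotNat
  rw [dif_pos (Nat.mod_lt _ hN), dif_pos (Nat.mod_lt _ hN)]
  congr 1
  exact Fin.ext (Nat.mod_add_mod t (m + n) k)

lemma F_rot (hN : 0 < m + n) (w : Fin (m + n) → Bool) (k : ℕ) :
    ∀ t, F m n (rotNat (m + n) k w) t = F m n w (k + t) - F m n w k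
  | 0 => by simp [F]
  | t + 1 => by
    rw [show F m n (rotNat (m+n) k w) (t+1)
        = F m n (rotNat (m+n) k w) t
          + (if Wd m n (rotNat (m+n) k w) t then (n : ℤ) else -(m : ℤ)) from rfl]
    rw [F_rot hN w k t, Wd_rot hN w k t]
    rw [show k + (t + 1) = (k + t) + 1 by omega]
    rw [show F m n w ((k+t)+1)
        = F m n w (k+t) + (if Wd m n w (k+t) then (n : ℤ) else -(m : ℤ)) from rfl]
    rw [show t + k = k + t by omega]
    ring

lemma isword_rot (hN : 0 < m + n) (w : Fin (m + n) → Bool) (k : ℕ) :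
    IsWord m n (rotNat (m + n) k w) ↔ IsWord m n w := by
  unfold IsWord
  have hcard : (Finset.univ.filter fun i : Fin (m+n) => rotNat (m+n) k w i = true).card
      = (Finset.univ.filter fun i : Fin (m+n) => w i = true).card := by
    apply Finset.card_bij
      (fun i _ => (⟨(i.val + k) % (m + n), Nat.mod_lt _ hN⟩ : Fin (m + n)))
    · intro a ha
      simp only [Finset.mem_filter, Finset.mem_univ, true_and, rotNat] at ha ⊢
      exact (Finset.mem_filter.mp ha).2
    · intro a _ b _ hab
      have h1 : (a.val + k) % (m+n) = (b.val + k) % (m+n) := congrArg Fin.val hab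
      have h2 : a.val % (m+n) = b.val % (m+n) := Nat.ModEq.add_right_cancel' k h1
      exact Fin.ext (by rwa [Nat.mod_eq_of_lt a.isLt, Nat.mod_eq_of_lt b.isLt] at h2)
    · intro b hb
      simp only [Finset.mem_filter, Finset.mem_univ, true_and] at hb
      have hdm := Nat.div_add_mod k (m + n)
      have hmod : k % (m + n) < m + n := Nat.mod_lt _ hN
      have hmul : (m+n) * (k / (m+n) + 1) = (m+n) * (k / (m+n)) + (m+n) := by ring
      refine ⟨⟨(b.val + ((m+n) - k % (m+n))) % (m+n), Nat.mod_lt _ hN⟩, ?_, ?_⟩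
      · simp only [Finset.mem_filter, Finset.mem_univ, true_and, rotNat]
        refine Finset.mem_filter.mpr ⟨Finset.mem_univ _, (congrArg w (Fin.ext ?_)).trans hb⟩
        show ((b.val + ((m+n) - k % (m+n))) % (m+n) + k) % (m+n) = b.val
        rw [Nat.mod_add_mod]
        exact mod_helper (k / (m+n) + 1) (by omega) b.isLt
      · refine Fin.ext ?_
        show ((b.val + ((m+n) - k % (m+n))) % (m+n) + k) % (m+n) = b.val
        rw [Nat.mod_add_mod]
        exact mod_helper (k / (m+n) + 1) (by omega) b.isLt
  rw [hcard]
lemma rot_rot (hN : 0 < m + n) (w : Fin (m + n) → Bool) (k k' : ℕ) :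
    rotNat (m + n) k' (rotNat (m + n) k w) = rotNat (m + n) (k + k') w := by
  funext i
  unfold rotNat
  congr 1
  apply Fin.ext
  show ((i.val + k') % (m + n) + k) % (m + n) = (i.val + (k + k')) % (m + n)
  rw [Nat.mod_add_mod]
  congr 1
  omega

lemma rot_mod_zero (hN : 0 < m + n) (w : Fin (m + n) → Bool) {a : ℕ}
    (h : a % (m + n) = 0) : rotNat (m + n) a w = w := by
  funext i
  unfold rotNat
  congr 1
  apply Fin.ext
  show (i.val + a) % (m + n) = i.val
  rw [Nat.add_mod, h, Nat.add_zero, Nat.mod_mod_of_dvd _ dvd_rfl, Nat.mod_eq_of_lt i.isLt]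

lemma rot_cancel (hN : 0 < m + n) (w : Fin (m + n) → Bool) (k : ℕ) :
    rotNat (m + n) ((m + n) - k % (m + n)) (rotNat (m + n) k w) = w := by
  rw [rot_rot hN]
  apply rot_mod_zero hN
  have hdm := Nat.div_add_mod k (m + n)
  have hmod : k % (m + n) < m + n := Nat.mod_lt _ hN
  have hmul : (m+n) * (k / (m+n) + 1) = (m+n) * (k / (m+n)) + (m+n) := by ring
  have h1 : k + ((m + n) - k % (m + n)) = 0 + (m+n) * (k / (m+n) + 1) := by omega
  rw [h1, Nat.add_mul_mod_self_left, Nat.zero_mod]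

lemma rot_cancel' (hN : 0 < m + n) (w : Fin (m + n) → Bool) (k : ℕ) :
    rotNat (m + n) k (rotNat (m + n) ((m + n) - k % (m + n)) w) = w := by
  rw [rot_rot hN]
  apply rot_mod_zero hN
  have hdm := Nat.div_add_mod k (m + n)
  have hmod : k % (m + n) < m + n := Nat.mod_lt _ hN
  have hmul : (m+n) * (k / (m+n) + 1) = (m+n) * (k / (m+n)) + (m+n) := by ring
  have h1 : ((m + n) - k % (m + n)) + k = 0 + (m+n) * (k / (m+n) + 1) := by omega
  rw [h1, Nat.add_mul_mod_self_left, Nat.zero_mod]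

lemma rot_bijective (hN : 0 < m + n) (k : ℕ) :
    Function.Bijective (rotNat (m + n) k) := by
  constructor
  · exact Function.LeftInverse.injective (g := rotNat (m+n) ((m+n) - k % (m+n)))
      (fun w => rot_cancel hN w k)
  · exact Function.RightInverse.surjective (g := rotNat (m+n) ((m+n) - k % (m+n)))
      (fun w => rot_cancel' hN w k)

lemma dyck_ineq_iff (u : Fin (m + n) → Bool) {t : ℕ} (ht : t ≤ m + n) :
    m * rights (m + n) u t ≤ n * ups (m + n) u t ↔ 0 ≤ F m n u t := by
  rw [F_eq u t ht, sub_nonneg]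
  constructor <;> intro h <;> exact_mod_cast h

lemma anchor_iff (u : Fin (m + n) → Bool) {t : ℕ} (ht : t ≤ m + n) :
    m * rights (m + n) u t = n * ups (m + n) u t ↔ F m n u t = 0 := by
  rw [F_eq u t ht, sub_eq_zero]
  constructor <;> intro h <;> exact_mod_cast h.symm

lemma rot_dyck_iff (hN : 0 < m + n) (w : Fin (m + n) → Bool) (hw : IsWord m n w) (k : ℕ) :
    IsDyck m n (rotNat (m + n) k w) ↔ ∀ j < m + n, F m n w k ≤ F m n w j := by
  constructor
  · rintro ⟨-, hd⟩ j hj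
    -- choose t ∈ [1, m+n] with (k+t) ≡ j mod (m+n)
    have hdm := Nat.div_add_mod k (m + n)
    have hmod : k % (m + n) < m + n := Nat.mod_lt _ hN
    have hmul : (m+n) * (k / (m+n) + 1) = (m+n) * (k / (m+n)) + (m+n) := by ring
    set r := k % (m + n) with hr
    obtain ⟨t, ht1, htN, hteq⟩ : ∃ t, 1 ≤ t ∧ t ≤ m + n ∧ (k + t) % (m + n) = j := by
      rcases lt_trichotomy j r with hc | hc | hc
      · exact ⟨j + (m + n) - r, by omega, by omega,
          mod_helper (k / (m+n) + 1) (by omega) hj⟩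
      · exact ⟨m + n, by omega, le_rfl,
          mod_helper (k / (m+n) + 1) (by omega) hj⟩
      · exact ⟨j - r, by omega, by omega,
          mod_helper (k / (m+n)) (by omega) hj⟩
    have h1 := (dyck_ineq_iff _ htN).mp (hd t htN)
    rw [F_rot hN w k t] at h1
    have h2 : F m n w (k + t) = F m n w j :=
      F_congr_mod w hw (by rw [hteq, Nat.mod_eq_of_lt hj])
    omega
  · intro hmin
    refine ⟨(isword_rot hN w k).mpr hw, fun t ht => ?_⟩
    rw [dyck_ineq_iff _ ht, F_rot hN w k t]
    have h2 : F m n w (k + t) = F m n w ((k + t) % (m + n)) := F_mod w hw _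
    have h3 := hmin ((k + t) % (m + n)) (Nat.mod_lt _ hN)
    omega
lemma mod_inj_Icc (hN : 0 < m + n) {t1 t2 : ℕ} (h11 : 1 ≤ t1) (h12 : t1 ≤ m + n)
    (h21 : 1 ≤ t2) (h22 : t2 ≤ m + n) (h : t1 % (m + n) = t2 % (m + n)) : t1 = t2 := by
  rcases eq_or_lt_of_le h12 with he1 | hl1 <;> rcases eq_or_lt_of_le h22 with he2 | hl2
  · rw [he1, he2]
  · rw [he1, Nat.mod_self, Nat.mod_eq_of_lt hl2] at h; omega
  · rw [he2, Nat.mod_self, Nat.mod_eq_of_lt hl1] at h; omega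
  · rwa [Nat.mod_eq_of_lt hl1, Nat.mod_eq_of_lt hl2] at h

lemma anchors_card (hN : 0 < m + n) (w : Fin (m + n) → Bool) (hw : IsWord m n w) (k : ℕ) :
    (anchors m n (rotNat (m + n) k w)).card
      = ((Finset.range (m + n)).filter fun j => F m n w j = F m n w k).card := by
  have huw : IsWord m n (rotNat (m + n) k w) := (isword_rot hN w k).mpr hw
  apply Finset.card_bij (fun t _ => (k + t) % (m + n))
  · intro t ht
    rw [anchors, Finset.mem_filter, Finset.mem_Icc] at ht
    obtain ⟨⟨ht1, ht2⟩, hanch⟩ := ht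
    rw [anchor_iff _ ht2, F_rot hN w k t] at hanch
    rw [Finset.mem_filter, Finset.mem_range]
    refine ⟨Nat.mod_lt _ hN, ?_⟩
    rw [← F_mod w hw (k + t)]
    omega
  · intro t1 ht1 t2 ht2 heq
    rw [anchors, Finset.mem_filter, Finset.mem_Icc] at ht1 ht2
    have h1 : (k + t1) % (m + n) = (k + t2) % (m + n) := heq
    have h2 : t1 % (m + n) = t2 % (m + n) := Nat.ModEq.add_left_cancel' k h1
    exact mod_inj_Icc hN ht1.1.1 ht1.1.2 ht2.1.1 ht2.1.2 h2
  · intro j hj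
    rw [Finset.mem_filter, Finset.mem_range] at hj
    obtain ⟨hjN, hjF⟩ := hj
    have hdm := Nat.div_add_mod k (m + n)
    have hmod : k % (m + n) < m + n := Nat.mod_lt _ hN
    have hmul : (m+n) * (k / (m+n) + 1) = (m+n) * (k / (m+n)) + (m+n) := by ring
    set r := k % (m + n) with hr
    obtain ⟨t, ht1, htN, hteq⟩ : ∃ t, 1 ≤ t ∧ t ≤ m + n ∧ (k + t) % (m + n) = j := by
      rcases lt_trichotomy j r with hc | hc | hc
      · exact ⟨j + (m + n) - r, by omega, by omega,
          mod_helper (k / (m+n) + 1) (by omega) hjN⟩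
      · exact ⟨m + n, by omega, le_rfl,
          mod_helper (k / (m+n) + 1) (by omega) hjN⟩
      · exact ⟨j - r, by omega, by omega,
          mod_helper (k / (m+n)) (by omega) hjN⟩
    refine ⟨t, ?_, hteq⟩
    rw [anchors, Finset.mem_filter, Finset.mem_Icc]
    refine ⟨⟨ht1, htN⟩, ?_⟩
    rw [anchor_iff _ htN, F_rot hN w k t]
    have h2 : F m n w (k + t) = F m n w j :=
      F_congr_mod w hw (by rw [hteq, Nat.mod_eq_of_lt hjN])
    omega

lemma sum_rot (hN : 0 < m + n) (w : Fin (m + n) → Bool) (hw : IsWord m n w) :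
    ∑ k ∈ Finset.range (m + n),
        (if IsDyck m n (rotNat (m + n) k w) then
          (1 : ℚ) / (anchors m n (rotNat (m + n) k w)).card else 0) = 1 := by
  classical
  set S := (Finset.range (m + n)).filter
      (fun j => ∀ i < m + n, F m n w j ≤ F m n w i) with hS
  have hSne : S.Nonempty := by
    obtain ⟨j, hj, hmin⟩ := Finset.exists_min_image (Finset.range (m + n)) (F m n w)
      ⟨0, Finset.mem_range.mpr hN⟩
    exact ⟨j, Finset.mem_filter.mpr ⟨hj, fun i hi => hmin i (Finset.mem_range.mpr hi)⟩⟩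
  have hterm : ∀ k ∈ Finset.range (m + n),
      (if IsDyck m n (rotNat (m + n) k w) then
        (1 : ℚ) / (anchors m n (rotNat (m + n) k w)).card else 0)
      = (if (∀ i < m + n, F m n w k ≤ F m n w i) then (1 : ℚ) / S.card else 0) := by
    intro k hk
    rw [Finset.mem_range] at hk
    by_cases hd : ∀ i < m + n, F m n w k ≤ F m n w i
    · rw [if_pos hd, if_pos ((rot_dyck_iff hN w hw k).mpr hd)]
      congr 2
      rw [anchors_card hN w hw k]
      congr 1
      apply Finset.filter_congr
      intro j hj
      rw [Finset.mem_range] at hj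
      constructor
      · intro hjk i hi
        exact le_trans (le_of_eq hjk) (hd i hi)
      · intro hjmin
        exact le_antisymm (hjmin k hk) (hd j hj)
    · rw [if_neg hd, if_neg (fun hc => hd ((rot_dyck_iff hN w hw k).mp hc))]
  rw [Finset.sum_congr rfl hterm, ← Finset.sum_filter, ← hS, Finset.sum_const,
    nsmul_eq_mul]
  rw [mul_one_div, div_self]
  exact Nat.cast_ne_zero.mpr (Finset.card_ne_zero_of_mem hSne.choose_spec)
lemma card_words :
    (Finset.univ.filter (IsWord m n)).card = Nat.choose (m + n) n := by
  classical
  have hb : (Finset.univ.filter (IsWord m n)).card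
      = (Finset.powersetCard m (Finset.univ : Finset (Fin (m + n)))).card := by
    apply Finset.card_bij (fun w _ => Finset.univ.filter (fun i => w i = true))
    · intro w hw
      rw [Finset.mem_filter] at hw
      rw [Finset.mem_powersetCard]
      exact ⟨Finset.subset_univ _, hw.2⟩
    · intro w1 h1 w2 h2 heq
      funext i
      have hiff : w1 i = true ↔ w2 i = true := by
        have h3 : i ∈ Finset.univ.filter (fun j => w1 j = true)
            ↔ i ∈ Finset.univ.filter (fun j => w2 j = true) := by rw [heq]
        simpa using h3
      cases hw1 : w1 i <;> cases hw2 : w2 i <;> simp_all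
    · intro s hs
      rw [Finset.mem_powersetCard] at hs
      refine ⟨fun i => decide (i ∈ s), ?_, ?_⟩
      · rw [Finset.mem_filter]
        refine ⟨Finset.mem_univ _, ?_⟩
        rw [IsWord]
        rw [show (Finset.filter (fun i => decide (i ∈ s) = true) Finset.univ) = s from by
          ext i; simp]
        exact hs.2
      · ext i
        simp
  have h2 : (m + n) - n = m := by omega
  rw [hb, Finset.card_powersetCard, Finset.card_univ, Fintype.card_fin,
    ← Nat.choose_symm (Nat.le_add_left n m), h2]

end DyckAux

/-- The sum over all `(m,n)`-Dyck words `p` of `(m+n)/a(p)` equals the binomial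
coefficient `C(m+n, n)`. -/

theorem dyck_rotation_sum (m n : ℕ) (hm : 0 < m) (hn : 0 < n) :
    ∑ w ∈ Finset.univ.filter (IsDyck m n),
        ((m + n : ℚ) / (anchors m n w).card)
      = Nat.choose (m + n) n := by
  classical
  have hN : 0 < m + n := by omega
  set g : (Fin (m + n) → Bool) → ℚ :=
    fun p => if IsDyck m n p then 1 / (anchors m n p).card else 0 with hg
  have key : ∀ w : Fin (m + n) → Bool,
      ∑ k ∈ Finset.range (m + n), g (rotNat (m + n) k w)
        = if IsWord m n w then 1 else 0 := by
    intro w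
    by_cases hw : IsWord m n w
    · rw [if_pos hw]
      exact DyckAux.sum_rot hN w hw
    · rw [if_neg hw]
      apply Finset.sum_eq_zero
      intro k _
      rw [hg]
      simp only
      rw [if_neg]
      intro hd
      exact hw ((DyckAux.isword_rot hN w k).mp hd.1)
  have reindex : ∀ k : ℕ,
      ∑ w : Fin (m + n) → Bool, g (rotNat (m + n) k w) = ∑ p : Fin (m + n) → Bool, g p :=
    fun k => Fintype.sum_bijective (rotNat (m + n) k) (DyckAux.rot_bijective hN k) _ _
      (fun _ => rfl)
  have swap : ∑ w : Fin (m + n) → Bool,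
      ∑ k ∈ Finset.range (m + n), g (rotNat (m + n) k w)
      = (m + n : ℚ) * ∑ p : Fin (m + n) → Bool, g p := by
    rw [Finset.sum_comm]
    rw [Finset.sum_congr rfl (fun k _ => reindex k), Finset.sum_const, Finset.card_range,
      nsmul_eq_mul]
    push_cast
    ring
  have total : ∑ w : Fin (m + n) → Bool, (if IsWord m n w then (1 : ℚ) else 0)
      = Nat.choose (m + n) n := by
    rw [Finset.sum_boole, ← DyckAux.card_words (m := m) (n := n)]
  have hmain : (m + n : ℚ) * ∑ p : Fin (m + n) → Bool, g p = Nat.choose (m + n) n := by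
    rw [← swap, Finset.sum_congr rfl (fun w _ => key w), total]
  have hlhs : ∑ w ∈ Finset.univ.filter (IsDyck m n),
      ((m + n : ℚ) / (anchors m n w).card)
      = (m + n : ℚ) * ∑ p : Fin (m + n) → Bool, g p := by
    rw [Finset.mul_sum]
    rw [show ∑ p : Fin (m + n) → Bool, (m + n : ℚ) * g p
        = ∑ p ∈ Finset.univ.filter (IsDyck m n), (m + n : ℚ) * g p from ?_]
    · apply Finset.sum_congr rfl
      intro w hw
      rw [Finset.mem_filter] at hw
      rw [hg]
      simp only
      rw [if_pos hw.2, mul_one_div]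
    · rw [Finset.sum_filter]
      apply Finset.sum_congr rfl
      intro w _
      rw [hg]
      simp only
      by_cases hd : IsDyck m n w
      · rw [if_pos hd, if_pos hd]
      · rw [if_neg hd, if_neg hd, mul_zero]
  rw [hlhs, hmain]
end

section
/- For n a positive integer, the sum over all (n,n)-Dyck words p of n/a(p) equals (n/(2n)) * C(2n, n) = (1/2) * C(2n, n), where a(p) counts the returns of p to the diagonal (vertices (j,j) with j > 0). -/
open Finset Fin.NatCast

section Height

variable {N : ℕ} (w : Fin N → Bool)

def height (t : ℕ) : ℤ := (ups N w t : ℤ) - rights N w t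

lemma card_filter_val_lt_succ (p : Fin N → Prop) [DecidablePred p] {t : ℕ} (ht : t < N) :
    #{i : Fin N | i.val < t + 1 ∧ p i} =
      #{i : Fin N | i.val < t ∧ p i} + if p ⟨t, ht⟩ then 1 else 0 := by
  split_ifs with hp
  · rw [← card_insert_of_notMem (a := ⟨t, ht⟩) (by simp)]
    congr 1; ext i
    simp only [mem_filter, mem_univ, true_and, mem_insert, Fin.ext_iff]
    grind
  · rw [add_zero]; congr 1; ext i
    simp only [mem_filter, mem_univ, true_and]
    grind

lemma height_zero : height w 0 = 0 := by
  simp [height, ups, rights]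

lemma height_succ {t : ℕ} (ht : t < N) :
    height w (t + 1) = height w t + if w ⟨t, ht⟩ then 1 else -1 := by
  simp only [height, ups, rights, card_filter_val_lt_succ _ ht]
  cases w ⟨t, ht⟩ <;> simp only [Bool.false_eq_true, if_true, if_false] <;> push_cast <;> ring

lemma height_self : height w N = #{i | w i = true} - #{i | w i = false} := by
  simp [height, ups, rights]

end Height

section Rotation

variable {N : ℕ} [NeZero N]

lemma rotNat_apply (k : ℕ) (w : Fin N → Bool) (i : Fin N) : rotNat N k w i = w (i + k) :=
  congrArg w (Fin.ext (by simp [Fin.val_add, Fin.val_natCast, Nat.add_mod_mod]))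

lemma rotNat_rotNat (j k : Fin N) (w : Fin N → Bool) :
    rotNat N k (rotNat N j w) = rotNat N ↑(k + j) w := by
  funext i
  simp [rotNat_apply, add_assoc]

lemma rotNat_neg_rotNat (k : Fin N) (w : Fin N → Bool) : rotNat N ↑(-k) (rotNat N k w) = w := by
  funext i
  simp [rotNat_apply]

lemma card_filter_rotNat_eq (k : ℕ) (w : Fin N → Bool) (b : Bool) :
    #{i | rotNat N k w i = b} = #{i | w i = b} :=
  card_equiv (Equiv.addRight (k : Fin N)) (by simp [rotNat_apply])

lemma card_filter_rotNat_rotNat (P : (Fin N → Bool) → Prop) [DecidablePred P] (j : Fin N)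
    (w : Fin N → Bool) :
    #{k : Fin N | P (rotNat N k (rotNat N j w))} = #{k : Fin N | P (rotNat N k w)} :=
  card_equiv (Equiv.addRight j) (by simp [rotNat_rotNat])

end Rotation

section Cyclic

variable {N : ℕ} {w : Fin N → Bool}

lemma height_succ_mod (hw : height w N = 0) {r : ℕ} (hr : r < N) :
    height w ((r + 1) % N) = height w r + if w ⟨r, hr⟩ then 1 else -1 := by
  rcases (show r + 1 ≤ N from hr).lt_or_eq with h | h
  · rw [Nat.mod_eq_of_lt h, height_succ]
  · rw [h, Nat.mod_self, height_zero, ← height_succ w hr, h, hw]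

lemma height_rotNat (hw : height w N = 0) {k : ℕ} (hk : k < N) {t : ℕ} (ht : t ≤ N) :
    height (rotNat N k w) t = height w ((k + t) % N) - height w k := by
  induction t with
  | zero => simp [height_zero, Nat.mod_eq_of_lt hk]
  | succ t ih =>
    have htN : t < N := ht
    have hr : (k + t) % N < N := Nat.mod_lt _ (by omega)
    have hstep : rotNat N k w ⟨t, htN⟩ = w ⟨(k + t) % N, hr⟩ := by simp [rotNat, Nat.add_comm]
    rw [height_succ _ htN, ih htN.le, hstep, ← add_assoc, ← Nat.mod_add_mod (k + t),
      height_succ_mod hw hr]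
    ring

/-- The cycle lemma. -/
lemma nonneg_height_rotNat_iff (hw : height w N = 0) {k : ℕ} (hk : k < N) :
    (∀ t ≤ N, 0 ≤ height (rotNat N k w) t) ↔ ∀ s < N, height w k ≤ height w s := by
  have hN : 0 < N := by omega
  constructor
  · intro h s hs
    have hks : (k + (s + (N - k)) % N) % N = s := by
      rw [Nat.add_mod_mod, show k + (s + (N - k)) = s + N by omega, Nat.add_mod_right,
        Nat.mod_eq_of_lt hs]
    have hlt : (s + (N - k)) % N < N := Nat.mod_lt _ hN
    have := h _ hlt.le
    rw [height_rotNat hw hk hlt.le, hks] at this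
    linarith
  · intro h t ht
    rw [height_rotNat hw hk ht]
    linarith [h _ (Nat.mod_lt (k + t) hN)]

end Cyclic

section WeightedDoubleCounting

variable {K α ι : Type*} [Field K] [CharZero K] [Fintype ι] {W : Finset α} {σ : ι → α → α}
  {P : α → Prop} [DecidablePred P]

/-- Every `w ∈ W` spreads a unit mass evenly over the `k` with `P (σ k w)`; collecting the mass
at the points `σ k w` instead gives each `a ∈ W` with `P a` the weight `1 / #{j | P (σ j a)}`
once for every `k`. -/
lemma card_eq_card_mul_sum_inv_card_filter (hσ : ∀ k, Set.BijOn (σ k) W W)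
    (hne : ∀ w ∈ W, ∃ k, P (σ k w))
    (hinv : ∀ k, ∀ w ∈ W, #{j | P (σ j (σ k w))} = #{j | P (σ j w)}) :
    (#W : K) = Fintype.card ι * ∑ a ∈ W with P a, (1 : K) / #{j | P (σ j a)} := by
  set D : α → ℕ := fun a => #{j | P (σ j a)}
  have hunit : ∀ w ∈ W, ∑ k, (if P (σ k w) then (1 : K) / D w else 0) = 1 := by
    intro w hw
    obtain ⟨k, hk⟩ := hne w hw
    have hD : (D w : K) ≠ 0 := by exact_mod_cast (card_pos.mpr ⟨k, by simpa using hk⟩).ne'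
    rw [← sum_filter, sum_const, nsmul_eq_mul]
    exact mul_one_div_cancel hD
  have hshift : ∀ k, ∑ w ∈ W, (if P (σ k w) then (1 : K) / D w else 0)
      = ∑ a ∈ W, if P a then (1 : K) / D a else 0 := fun k =>
    sum_nbij (σ k) (hσ k).mapsTo (hσ k).injOn (hσ k).surjOn
      fun w hw => by simp only [D, hinv k w hw]
  calc (#W : K) = ∑ w ∈ W, ∑ k, (if P (σ k w) then (1 : K) / D w else 0) := by
        rw [sum_congr rfl hunit, sum_const, nsmul_one]
    _ = ∑ k, ∑ w ∈ W, (if P (σ k w) then (1 : K) / D w else 0) := sum_comm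
    _ = Fintype.card ι * ∑ a ∈ W with P a, (1 : K) / D a := by
        simp only [hshift, sum_const, card_univ, nsmul_eq_mul, sum_filter]

end WeightedDoubleCounting

lemma card_filter_Icc_one_eq_card_filter_fin {N : ℕ} (hN : 0 < N) (Q : ℕ → Prop)
    [DecidablePred Q] (hQ : Q 0 ↔ Q N) : #{t ∈ Icc 1 N | Q t} = #{k : Fin N | Q k} := by
  have hIcc : Icc 1 N = insert N (Ioo 0 N) := by ext; simp; omega
  have hrange : range N = insert 0 (Ioo 0 N) := by ext; simp; omega
  have hfin : #{k : Fin N | Q k} = #{t ∈ range N | Q t} :=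
    card_nbij Fin.val (fun k hk => by simpa using hk) Fin.val_injective.injOn
      fun t ht => by simp at ht; exact ⟨⟨t, ht.1⟩, by simpa using ht.2, rfl⟩
  rw [hfin, hIcc, hrange, filter_insert, filter_insert]
  by_cases hQN : Q N
  · rw [if_pos hQN, if_pos (hQ.mpr hQN), card_insert_of_notMem (by simp),
      card_insert_of_notMem (by simp)]
  · rw [if_neg hQN, if_neg (mt hQ.mp hQN)]

lemma card_isWord (n : ℕ) : #{w : Fin (n + n) → Bool | IsWord n n w} = (n + n).choose n := by
  rw [show (n + n).choose n = #(powersetCard n (univ : Finset (Fin (n + n)))) by simp]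
  refine card_nbij' (fun w => ({i | w i = true} : Finset (Fin (n + n))))
    (fun s i => decide (i ∈ s)) ?_ ?_ ?_ ?_ <;> intro x hx <;> simp_all [mem_powersetCard] <;>
    simp_all [IsWord]

section Square

variable {n : ℕ} {w : Fin (n + n) → Bool}

lemma isWord_rotNat (hn : 0 < n) (k : ℕ) (hw : IsWord n n w) : IsWord n n (rotNat (n + n) k w) :=
  have := NeZero.of_pos (Nat.add_pos_left hn n)
  (card_filter_rotNat_eq k w true).trans hw

lemma bijOn_rotNat (hn : 0 < n) (k : Fin (n + n)) :
    Set.BijOn (rotNat (n + n) k) {w | IsWord n n w} {w | IsWord n n w} := by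
  have := NeZero.of_pos (Nat.add_pos_left hn n)
  refine Set.InvOn.bijOn (f' := rotNat (n + n) ↑(-k)) ⟨fun w _ => rotNat_neg_rotNat k w,
    fun w _ => by simpa using rotNat_neg_rotNat (-k) w⟩ ?_ ?_ <;>
  exact fun w hw => isWord_rotNat hn _ hw

lemma height_self_of_isWord (hw : IsWord n n w) : height w (n + n) = 0 := by
  have hsum := card_filter_add_card_filter_not (s := univ) (fun i => w i = true)
  simp only [Bool.not_eq_true, card_univ, Fintype.card_fin] at hsum
  rw [height_self]
  unfold IsWord at hw
  omega

lemma isDyck_iff_nonneg_height (hn : 0 < n) :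
    IsDyck n n w ↔ IsWord n n w ∧ ∀ t ≤ n + n, 0 ≤ height w t := by
  refine and_congr_right fun _ => forall₂_congr fun t _ => ?_
  rw [Nat.mul_le_mul_left_iff hn, height]
  omega

lemma anchors_eq_filter_height (hn : 0 < n) :
    anchors n n w = {t ∈ Icc 1 (n + n) | height w t = 0} :=
  filter_congr fun t _ => by rw [Nat.mul_left_cancel_iff hn, height]; omega

lemma isDyck_rotNat_iff (hn : 0 < n) (hw : IsWord n n w) {k : ℕ} (hk : k < n + n) :
    IsDyck n n (rotNat (n + n) k w) ↔ ∀ s < n + n, height w k ≤ height w s := by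
  rw [isDyck_iff_nonneg_height hn, and_iff_right (isWord_rotNat hn k hw)]
  exact nonneg_height_rotNat_iff (height_self_of_isWord hw) hk

lemma exists_isDyck_rotNat (hn : 0 < n) (hw : IsWord n n w) :
    ∃ k : Fin (n + n), IsDyck n n (rotNat (n + n) k w) := by
  have := NeZero.of_pos (Nat.add_pos_left hn n)
  obtain ⟨k, -, hmin⟩ := exists_min_image univ (fun k : Fin (n + n) => height w k) univ_nonempty
  exact ⟨k, (isDyck_rotNat_iff hn hw k.isLt).mpr fun s hs => hmin ⟨s, hs⟩ (mem_univ _)⟩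

lemma isDyck_rotNat_iff_height_eq_zero (hn : 0 < n) (hw : IsDyck n n w) {k : ℕ}
    (hk : k < n + n) : IsDyck n n (rotNat (n + n) k w) ↔ height w k = 0 := by
  have hnonneg := ((isDyck_iff_nonneg_height hn).mp hw).2
  rw [isDyck_rotNat_iff hn hw.1 hk]
  constructor
  · intro hmin
    have h0 := hmin 0 (by omega)
    rw [height_zero] at h0
    exact le_antisymm h0 (hnonneg k hk.le)
  · intro hk0 s hs
    rw [hk0]
    exact hnonneg s hs.le

lemma card_isDyck_rotNat_eq_card_anchors (hn : 0 < n) (hw : IsDyck n n w) :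
    #{k : Fin (n + n) | IsDyck n n (rotNat (n + n) k w)} = #(anchors n n w) := by
  have hends : height w 0 = 0 ↔ height w (n + n) = 0 := by
    simp [height_zero, height_self_of_isWord hw.1]
  rw [filter_congr fun k _ => isDyck_rotNat_iff_height_eq_zero hn hw k.isLt,
    ← card_filter_Icc_one_eq_card_filter_fin (by omega) (fun t => height w t = 0) hends,
    anchors_eq_filter_height hn]

end Square

/-- Square case of Theorem 1: for positive `n`, the sum over all `(n,n)`-Dyck words `p`
of `n/a(p)` equals `(n/(2n)) * C(2n,n) = (1/2) * C(2n, n)`, where `a(p)` counts the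
returns of `p` to the diagonal. -/
theorem square_anchored_sum (n : ℕ) (hn : 0 < n) :
    ∑ w ∈ Finset.univ.filter (IsDyck n n),
        ((n : ℚ) / (anchors n n w).card)
      = (1 / 2) * Nat.choose (n + n) n := by
  have := NeZero.of_pos (Nat.add_pos_left hn n)
  have hcount := card_eq_card_mul_sum_inv_card_filter (K := ℚ)
    (W := {w : Fin (n + n) → Bool | IsWord n n w}) (P := IsDyck n n)
    (fun k => by simpa using bijOn_rotNat hn k)
    (fun w hw => exists_isDyck_rotNat hn (mem_filter.mp hw).2)
    (fun k w _ => card_filter_rotNat_rotNat (IsDyck n n) k w)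
  have hdyck : (univ.filter (IsWord n n)).filter (IsDyck n n) = univ.filter (IsDyck n n) := by
    rw [filter_filter]
    exact filter_congr fun w _ => and_iff_right_of_imp And.left
  rw [card_isWord, Fintype.card_fin, hdyck, sum_congr rfl fun w hw => by
    rw [card_isDyck_rotNat_eq_card_anchors hn (mem_filter.mp hw).2]] at hcount
  rw [hcount, mul_sum, mul_sum]
  refine sum_congr rfl fun w _ => ?_
  push_cast
  field_simp
  ring
end
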